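/- arXiv:math/9806160 — 7 statements merged into one kernel-verified Lean document; each statement's English description precedes it below -/
import Mathlib

section
/- Let V be a finite-dimensional real inner product space and let 𝔤 ⊆ End(V) be a linear subspace that is closed under taking adjoints and whose first prolongation vanishes, i.e. the only linear map τ : V → 𝔤 with τ(u)v = τ(v)u for all u,v ∈ V is τ = 0. Define W = {T ∈ A²(V;V) : trace(A ∘ T(v,·)) = 0 for every A ∈ 𝔤 and every v ∈ V}, where T(v,·) is the endomorphism w ↦ T(v,w). Then A²(V;V) is the internal direct sum of δ(Hom(V,𝔤)) and W: every T ∈ A²(V;V) can be written uniquely as T = δτ + T̃ with τ ∈ Hom(V,𝔤) and T̃ ∈ W. -/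
/-!
Fix an orthonormal basis and pair bilinear maps by `⟪S, T⟫ = ∑ᵢⱼ ⟪S(eᵢ, eⱼ), T(eᵢ, eⱼ)⟫`.
Because `𝔤` is closed under adjoints, `W` is exactly the set of `T` orthogonal to every
`τ ∈ Hom(V, 𝔤)`. For alternating `T` one has `⟪δσ, T⟫ = 2⟪σ, T⟫`, so `⟪σ, δσ⟫ = ½‖δσ‖²`, and the
form `(σ, τ) ↦ ⟪τ, δσ⟫` on `Hom(V, 𝔤)` is anisotropic precisely because `δ` is injective there,
i.e. because the prolongation vanishes. In finite dimension it therefore identifies `Hom(V, 𝔤)`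
with its dual: some `σ` has `⟪τ, δσ⟫ = ⟪τ, T⟫` for all `τ`, i.e. `T - δσ ∈ W`, and anisotropy
makes `σ` unique.
-/

open scoped RealInnerProductSpace

namespace AlternationTraceComplement

section Alternation

variable {R M N : Type*} [CommRing R] [AddCommGroup M] [Module R M] [AddCommGroup N] [Module R N]

noncomputable def alternation : (M →ₗ[R] M →ₗ[R] N) →ₗ[R] M →ₗ[R] M →ₗ[R] N :=
  LinearMap.id - (LinearMap.lflip : (M →ₗ[R] M →ₗ[R] N) ≃ₗ[R] _).toLinearMap

lemma alternation_apply (τ : M →ₗ[R] M →ₗ[R] N) : alternation τ = τ - τ.flip := rfl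

lemma isAlt_alternation (τ : M →ₗ[R] M →ₗ[R] N) : (alternation τ).IsAlt := fun v => by
  simp [alternation_apply]

end Alternation

def homInto {R M N : Type*} [CommSemiring R] [AddCommMonoid M] [Module R M] [AddCommMonoid N]
    [Module R N] (p : Submodule R N) : Submodule R (M →ₗ[R] N) where
  carrier := {τ | ∀ u, τ u ∈ p}
  add_mem' hτ hτ' u := p.add_mem (hτ u) (hτ' u)
  zero_mem' _ := p.zero_mem
  smul_mem' c _ hτ u := p.smul_mem c (hτ u)

lemma surjective_of_apply_self_eq_zero {K E : Type*} [Field K] [AddCommGroup E] [Module K E]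
    [FiniteDimensional K E] (B : E →ₗ[K] Module.Dual K E) (hB : ∀ x, B x x = 0 → x = 0) :
    Function.Surjective B :=
  (LinearMap.injective_iff_surjective_of_finrank_eq_finrank Subspace.dual_finrank_eq.symm).1 <|
    (injective_iff_map_eq_zero B).2 fun x hx => hB x (by rw [hx, LinearMap.zero_apply])

variable {V : Type*} [NormedAddCommGroup V] [InnerProductSpace ℝ V]

section Frobenius

variable {ι : Type*} [Fintype ι] (b : OrthonormalBasis ι ℝ V)

/-- The Hilbert–Schmidt inner product; it does not depend on `b`. -/
noncomputable def frobeniusInner : (V →ₗ[ℝ] V →ₗ[ℝ] V) →ₗ[ℝ] (V →ₗ[ℝ] V →ₗ[ℝ] V) →ₗ[ℝ] ℝ :=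
  LinearMap.mk₂ ℝ (fun S T => ∑ i, ∑ j, ⟪S (b i) (b j), T (b i) (b j)⟫)
    (fun S S' T => by simp [inner_add_left, Finset.sum_add_distrib])
    (fun c S T => by simp [real_inner_smul_left, Finset.mul_sum])
    (fun S T T' => by simp [inner_add_right, Finset.sum_add_distrib])
    (fun c S T => by simp [real_inner_smul_right, Finset.mul_sum])

lemma frobeniusInner_apply (S T : V →ₗ[ℝ] V →ₗ[ℝ] V) :
    frobeniusInner b S T = ∑ i, ∑ j, ⟪S (b i) (b j), T (b i) (b j)⟫ := rfl

lemma frobeniusInner_flip_left (S T : V →ₗ[ℝ] V →ₗ[ℝ] V) :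
    frobeniusInner b S.flip T = frobeniusInner b S T.flip := by
  simp only [frobeniusInner_apply, LinearMap.flip_apply]
  exact Finset.sum_comm

lemma eq_zero_of_frobeniusInner_self_eq_zero {S : V →ₗ[ℝ] V →ₗ[ℝ] V}
    (h : frobeniusInner b S S = 0) : S = 0 := by
  have hnonneg (i : ι) : 0 ≤ ∑ j, ⟪S (b i) (b j), S (b i) (b j)⟫ :=
    Finset.sum_nonneg fun j _ => real_inner_self_nonneg
  rw [frobeniusInner_apply, Finset.sum_eq_zero_iff_of_nonneg fun i _ => hnonneg i] at h
  refine b.toBasis.ext fun i => b.toBasis.ext fun j => ?_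
  have hij := (Finset.sum_eq_zero_iff_of_nonneg fun j _ => real_inner_self_nonneg).1
    (h i (Finset.mem_univ i)) j (Finset.mem_univ j)
  simpa using inner_self_eq_zero.1 hij

lemma frobeniusInner_alternation_left_of_isAlt (S : V →ₗ[ℝ] V →ₗ[ℝ] V)
    {T : V →ₗ[ℝ] V →ₗ[ℝ] V} (hT : T.IsAlt) :
    frobeniusInner b (alternation S) T = 2 * frobeniusInner b S T := by
  have hflip : T.flip = -T := LinearMap.ext₂ fun u v => by
    simpa using (hT.neg u v).symm
  rw [alternation_apply, map_sub, LinearMap.sub_apply, frobeniusInner_flip_left, hflip, map_neg]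
  ring

lemma frobeniusInner_eq_sum_trace [FiniteDimensional ℝ V] (S T : V →ₗ[ℝ] V →ₗ[ℝ] V) :
    frobeniusInner b S T = ∑ i, LinearMap.trace ℝ V (LinearMap.adjoint (S (b i)) ∘ₗ T (b i)) := by
  simp [frobeniusInner_apply, LinearMap.trace_eq_sum_inner _ b, LinearMap.adjoint_inner_right]

end Frobenius

section HomInto

variable {g : Submodule ℝ (V →ₗ[ℝ] V)} {ι : Type*} [Fintype ι] (b : OrthonormalBasis ι ℝ V)

lemma forall_trace_comp_eq_zero_iff [FiniteDimensional ℝ V]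
    (hadj : ∀ A ∈ g, LinearMap.adjoint A ∈ g) (T : V →ₗ[ℝ] V →ₗ[ℝ] V) :
    (∀ A ∈ g, ∀ v, LinearMap.trace ℝ V (A ∘ₗ T v) = 0) ↔
      ∀ τ ∈ homInto g, frobeniusInner b τ T = 0 := by
  refine ⟨fun h τ hτ => ?_, fun h A hA v => ?_⟩
  · rw [frobeniusInner_eq_sum_trace]
    exact Finset.sum_eq_zero fun i _ => h _ (hadj _ (hτ (b i))) (b i)
  · let τ : V →ₗ[ℝ] V →ₗ[ℝ] V := (innerₛₗ ℝ v).smulRight (LinearMap.adjoint A)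
    have hτ : τ ∈ homInto g := fun u => g.smul_mem _ (hadj A hA)
    let f : V →ₗ[ℝ] ℝ := LinearMap.trace ℝ V ∘ₗ LinearMap.llcomp ℝ V V V A ∘ₗ T
    calc LinearMap.trace ℝ V (A ∘ₗ T v)
        = f (∑ i, ⟪b i, v⟫ • b i) := by rw [b.sum_repr']; rfl
      _ = frobeniusInner b τ T := by
        simp [f, frobeniusInner_eq_sum_trace, τ, real_inner_comm, LinearMap.smul_comp,
          LinearMap.llcomp_apply']
      _ = 0 := h τ hτ

lemma eq_zero_of_frobeniusInner_alternation_self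
    (hprol : ∀ τ : V →ₗ[ℝ] (V →ₗ[ℝ] V),
      (∀ u : V, τ u ∈ g) → (∀ u v : V, τ u v = τ v u) → τ = 0)
    {τ : V →ₗ[ℝ] V →ₗ[ℝ] V} (hτ : τ ∈ homInto g) (h : frobeniusInner b τ (alternation τ) = 0) :
    τ = 0 := by
  have hδ : alternation τ = 0 := by
    apply eq_zero_of_frobeniusInner_self_eq_zero b
    rw [frobeniusInner_alternation_left_of_isAlt b τ (isAlt_alternation τ), h, mul_zero]
  refine hprol τ hτ fun u v => ?_
  simpa [alternation_apply, sub_eq_zero] using LinearMap.congr_fun₂ hδ u v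

lemma exists_frobeniusInner_alternation_eq [FiniteDimensional ℝ V]
    (hprol : ∀ τ : V →ₗ[ℝ] (V →ₗ[ℝ] V),
      (∀ u : V, τ u ∈ g) → (∀ u v : V, τ u v = τ v u) → τ = 0)
    (T : V →ₗ[ℝ] V →ₗ[ℝ] V) :
    ∃ σ ∈ homInto g, ∀ τ ∈ homInto g,
      frobeniusInner b τ (alternation σ) = frobeniusInner b τ T := by
  let Λ : homInto g →ₗ[ℝ] Module.Dual ℝ (homInto g) :=
    ((frobeniusInner b).compl₁₂ (homInto g).subtype (alternation ∘ₗ (homInto g).subtype)).flip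
  obtain ⟨σ, hσ⟩ := surjective_of_apply_self_eq_zero Λ
    (fun σ hσ => Subtype.ext (eq_zero_of_frobeniusInner_alternation_self b hprol σ.2 hσ))
    ((frobeniusInner b).flip T ∘ₗ (homInto g).subtype)
  exact ⟨σ, σ.2, fun τ hτ => LinearMap.congr_fun hσ ⟨τ, hτ⟩⟩

end HomInto

end AlternationTraceComplement

/-- Let `V` be a finite-dimensional real inner product space and
`𝔤 ⊆ End(V)` a linear subspace closed under adjoints whose first prolongation vanishes
(the only linear `τ : V → 𝔤` with `τ(u)v = τ(v)u` for all `u, v` is `τ = 0`).  With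
`W = {T ∈ A²(V;V) : trace(A ∘ T(v,·)) = 0 for all A ∈ 𝔤, v ∈ V}`, every alternating
bilinear `T : V × V → V` decomposes uniquely as `T = δτ + T̃` with `τ ∈ Hom(V,𝔤)` and
`T̃ ∈ W`. -/
theorem direct_sum_alternation_trace_complement
    {V : Type*} [NormedAddCommGroup V] [InnerProductSpace ℝ V] [FiniteDimensional ℝ V]
    (g : Submodule ℝ (V →ₗ[ℝ] V))
    (hadj : ∀ A ∈ g, LinearMap.adjoint A ∈ g)
    (hprol : ∀ τ : V →ₗ[ℝ] (V →ₗ[ℝ] V),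
      (∀ u : V, τ u ∈ g) → (∀ u v : V, τ u v = τ v u) → τ = 0)
    (T : V →ₗ[ℝ] V →ₗ[ℝ] V) (hT : ∀ v : V, T v v = 0) :
    ∃! p : (V →ₗ[ℝ] (V →ₗ[ℝ] V)) × (V →ₗ[ℝ] V →ₗ[ℝ] V),
      (∀ u : V, p.1 u ∈ g) ∧
      (∀ v : V, p.2 v v = 0) ∧
      (∀ A ∈ g, ∀ v : V, LinearMap.trace ℝ V (A ∘ₗ p.2 v) = 0) ∧
      (∀ u v : V, T u v = (p.1 u v - p.1 v u) + p.2 u v) := by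
  open AlternationTraceComplement in
  let b := stdOrthonormalBasis ℝ V
  have horth := forall_trace_comp_eq_zero_iff b hadj
  obtain ⟨σ, hσg, hσ⟩ := exists_frobeniusInner_alternation_eq b hprol T
  set T₀ := T - alternation σ
  have hT₀ : ∀ τ ∈ homInto g, frobeniusInner b τ T₀ = 0 := fun τ hτ => by
    rw [map_sub, hσ τ hτ, sub_self]
  refine ⟨(σ, T₀), ⟨hσg, fun v => ?_, (horth T₀).2 hT₀, fun u v => ?_⟩, ?_⟩
  · simp [T₀, alternation_apply, hT]
  · simp [T₀, alternation_apply]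
  rintro ⟨τ, S⟩ ⟨hτg, -, hS, hTS⟩
  have hδ : alternation (τ - σ) = T₀ - S := by
    ext u v
    simp only [alternation_apply, LinearMap.sub_apply, LinearMap.flip_apply, hTS, T₀]
    abel
  have hmem : τ - σ ∈ homInto g := (homInto g).sub_mem hτg hσg
  have hτσ : τ = σ := sub_eq_zero.1 <|
    eq_zero_of_frobeniusInner_alternation_self b hprol hmem <| by
    rw [hδ, map_sub, hT₀ _ hmem, (horth S).1 hS _ hmem, sub_self]
  rw [hτσ, sub_self, map_zero, eq_comm, sub_eq_zero] at hδ
  exact Prod.ext hτσ hδ.symm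
end

section
/- Let V be a finite-dimensional real inner product space with an orthogonal direct sum decomposition V = V₁ ⊕ V₂, and let 𝔤 = {A ∈ 𝔰𝔬(V) : A(V₁) ⊆ V₁ and A(V₂) ⊆ V₂}. Define W = {T̃ ∈ A²(V;V) : ⟨T̃(u,v),w⟩ = ⟨T̃(u,w),v⟩ for all u ∈ V whenever v and w both lie in V₁ or both lie in V₂}. Then A²(V;V) is the internal direct sum of δ(Hom(V,𝔤)) and W: every T ∈ A²(V;V) can be written uniquely as T = δτ + T̃ with τ ∈ Hom(V,𝔤) and T̃ ∈ W. -/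
/-!
Uniqueness is the uniqueness argument for the Levi-Civita connection, run on each summand: if
every `σ u` is skew, preserves `V₁` and `V₂`, and `δσ` is symmetric on each summand, then
`⟪σ u v, w⟫` vanishes for `v, w` in the same summand as `u` by the usual cyclic permutation
trick, and for `u` in the other summand because the two mixed terms `⟪σ v u, w⟫`, `⟪σ w u, v⟫`
pair vectors of different summands. Existence: on a summand `K` with orthogonal projection `P`,
take the Koszul formula
`⟪τ_K(u) v, w⟫ = ½ (⟪T(u, Pv), Pw⟫ - ⟪T(u, Pw), Pv⟫ - ⟪T(Pv, Pw), Pu⟫)`,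
and `τ = τ_{V₁} + τ_{V₂}`, `T̃ = T - δτ`.
-/

open scoped RealInnerProductSpace

section Alternation

variable {R M N : Type*} [CommRing R] [AddCommGroup M] [Module R M] [AddCommGroup N] [Module R N]

def alternation : (M →ₗ[R] M →ₗ[R] N) →ₗ[R] M →ₗ[R] M →ₗ[R] N :=
  LinearMap.id - LinearMap.lflip.toLinearMap

@[simp]
theorem alternation_apply (τ : M →ₗ[R] M →ₗ[R] N) (u v : M) :
    alternation τ u v = τ u v - τ v u := rfl

theorem LinearMap.apply_eq_neg_apply_of_apply_self (T : M →ₗ[R] M →ₗ[R] N)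
    (hT : ∀ v, T v v = 0) (u v : M) : T u v = -T v u := by
  have h := hT (u + v)
  simp only [map_add, LinearMap.add_apply, hT, zero_add, add_zero] at h
  exact eq_neg_of_add_eq_zero_left (by rwa [add_comm])

end Alternation

section InnerProductSpace

variable {V : Type*} [NormedAddCommGroup V] [InnerProductSpace ℝ V]

def IsSkewValued (σ : V →ₗ[ℝ] V →ₗ[ℝ] V) : Prop :=
  ∀ u v w, ⟪σ u v, w⟫ + ⟪v, σ u w⟫ = 0

def IsSymmOn (T : V →ₗ[ℝ] V →ₗ[ℝ] V) (K : Submodule ℝ V) : Prop :=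
  ∀ u, ∀ v ∈ K, ∀ w ∈ K, ⟪T u v, w⟫ = ⟪T u w, v⟫

theorem IsSymmOn.sub {S T : V →ₗ[ℝ] V →ₗ[ℝ] V} {K : Submodule ℝ V} (hS : IsSymmOn S K)
    (hT : IsSymmOn T K) : IsSymmOn (S - T) K := fun u v hv w hw => by
  simp only [LinearMap.sub_apply, inner_sub_left, hS u v hv w hw, hT u v hv w hw]

namespace IsSkewValued

section Algebra

variable {σ τ : V →ₗ[ℝ] V →ₗ[ℝ] V}

theorem inner_apply_swap (hσ : IsSkewValued σ) (u v w : V) :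
    ⟪σ u w, v⟫ = -⟪σ u v, w⟫ := by
  rw [real_inner_comm]; linarith [hσ u v w]

theorem add (hσ : IsSkewValued σ) (hτ : IsSkewValued τ) : IsSkewValued (σ + τ) :=
  fun u v w => by
    simp only [LinearMap.add_apply, inner_add_left, inner_add_right]
    linarith [hσ u v w, hτ u v w]

theorem sub (hσ : IsSkewValued σ) (hτ : IsSkewValued τ) : IsSkewValued (σ - τ) :=
  fun u v w => by
    simp only [LinearMap.sub_apply, inner_sub_left, inner_sub_right]
    linarith [hσ u v w, hτ u v w]

end Algebra

variable {σ : V →ₗ[ℝ] V →ₗ[ℝ] V} (hσ : IsSkewValued σ) {K L : Submodule ℝ V}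
  (hK : ∀ u, ∀ x ∈ K, σ u x ∈ K) (hsymK : IsSymmOn (alternation σ) K)
include hσ hK hsymK

theorem apply_eq_zero_of_mem {u v : V} (hu : u ∈ K) (hv : v ∈ K) : σ u v = 0 := by
  have hcyc : ∀ a, ∀ b ∈ K, ∀ c ∈ K, 2 * ⟪σ a b, c⟫ = ⟪σ b a, c⟫ - ⟪σ c a, b⟫ := by
    intro a b hb c hc
    have := hsymK a b hb c hc
    simp only [alternation_apply, inner_sub_left] at this
    linarith [hσ.inner_apply_swap a b c]
  have horth : ∀ w ∈ K, ⟪σ u v, w⟫ = 0 := fun w hw => by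
    linarith [hcyc u v hv w hw, hcyc v u hu w hw, hcyc w u hu v hv, hσ.inner_apply_swap w u v,
      hσ.inner_apply_swap u v w, hσ.inner_apply_swap v u w]
  exact inner_self_eq_zero.mp (horth _ (hK u v hv))

theorem apply_eq_zero_of_mem_of_isOrtho (hKL : K ⟂ L) (hL : ∀ u, ∀ x ∈ L, σ u x ∈ L)
    {u v : V} (hu : u ∈ L) (hv : v ∈ K) : σ u v = 0 := by
  have horth : ∀ w ∈ K, ⟪σ u v, w⟫ = 0 := fun w hw => by
    have := hsymK u v hv w hw
    simp only [alternation_apply, inner_sub_left, hKL.symm.inner_eq (hL v u hu) hw,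
      hKL.symm.inner_eq (hL w u hu) hv] at this
    linarith [hσ.inner_apply_swap u v w]
  exact inner_self_eq_zero.mp (horth _ (hK u v hv))

theorem eq_zero_of_isSymmOn_alternation (hKL : K ⟂ L) (hcod : Codisjoint K L)
    (hL : ∀ u, ∀ x ∈ L, σ u x ∈ L) (hsymL : IsSymmOn (alternation σ) L) : σ = 0 := by
  refine LinearMap.ext_on_codisjoint hcod (fun u hu => ?_) (fun u hu => ?_) <;>
    refine LinearMap.ext_on_codisjoint hcod (fun v hv => ?_) (fun v hv => ?_)
  · exact hσ.apply_eq_zero_of_mem hK hsymK hu hv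
  · exact hσ.apply_eq_zero_of_mem_of_isOrtho hL hsymL hKL.symm hK hu hv
  · exact hσ.apply_eq_zero_of_mem_of_isOrtho hK hsymK hKL hL hu hv
  · exact hσ.apply_eq_zero_of_mem hL hsymL hu hv

end IsSkewValued

variable [FiniteDimensional ℝ V]

/-- The last term uses the `K`-component of `u`, not `u` itself: otherwise `T - δτ` would fail
to be symmetric on `K` by `½ ⟪T(v, w), u - Pu⟫`. -/
noncomputable def koszulOn (K : Submodule ℝ V) (T : V →ₗ[ℝ] V →ₗ[ℝ] V) :
    V →ₗ[ℝ] V →ₗ[ℝ] V :=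
  LinearMap.mk₂ ℝ (fun u v => (2⁻¹ : ℝ) • K.starProjection
      (T u (K.starProjection v) - (T u).adjoint (K.starProjection v)
        - (T (K.starProjection v)).adjoint (K.starProjection u)))
    (fun _ _ _ => by simp only [map_add, map_sub, LinearMap.add_apply]; module)
    (fun _ _ _ => by simp only [map_smul, map_sub, LinearMap.smul_apply]; module)
    (fun _ _ _ => by simp only [map_add, map_sub, LinearMap.add_apply]; module)
    (fun _ _ _ => by simp only [map_smul, map_sub, LinearMap.smul_apply]; module)

section koszulOn

variable (K : Submodule ℝ V) (T : V →ₗ[ℝ] V →ₗ[ℝ] V)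

theorem inner_koszulOn (u v w : V) :
    ⟪koszulOn K T u v, w⟫ = 2⁻¹ * (⟪T u (K.starProjection v), K.starProjection w⟫
      - ⟪T u (K.starProjection w), K.starProjection v⟫
      - ⟪T (K.starProjection v) (K.starProjection w), K.starProjection u⟫) := by
  rw [koszulOn, LinearMap.mk₂_apply, real_inner_smul_left,
    Submodule.inner_starProjection_left_eq_right, inner_sub_left, inner_sub_left,
    LinearMap.adjoint_inner_left, LinearMap.adjoint_inner_left,
    real_inner_comm (K.starProjection v), real_inner_comm (K.starProjection u)]

theorem koszulOn_apply_mem (u v : V) : koszulOn K T u v ∈ K :=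
  K.smul_mem _ (K.starProjection_apply_mem _)

theorem koszulOn_apply_of_mem_orthogonal (u : V) {v : V} (hv : v ∈ Kᗮ) :
    koszulOn K T u v = 0 := by
  simp [koszulOn, (K.starProjection_apply_eq_zero_iff).mpr hv]

variable {T}

theorem isSkewValued_koszulOn (hT : ∀ v, T v v = 0) : IsSkewValued (koszulOn K T) := by
  intro u v w
  rw [real_inner_comm _ v, inner_koszulOn, inner_koszulOn,
    T.apply_eq_neg_apply_of_apply_self hT (K.starProjection w), inner_neg_left]
  ring

theorem isSymmOn_sub_alternation_koszulOn (hT : ∀ v, T v v = 0) :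
    IsSymmOn (T - alternation (koszulOn K T)) K := by
  intro u v hv w hw
  have hT' := T.apply_eq_neg_apply_of_apply_self hT
  simp only [LinearMap.sub_apply, alternation_apply, inner_sub_left, inner_koszulOn,
    Submodule.starProjection_eq_self_iff.mpr hv, Submodule.starProjection_eq_self_iff.mpr hw]
  rw [hT' (K.starProjection u) w, hT' (K.starProjection u) v, hT' w v]
  simp only [inner_neg_left]
  ring

end koszulOn

section OrthogonalPair

variable {K L : Submodule ℝ V} (hKL : K ⟂ L)
include hKL

theorem koszulOn_add_koszulOn_apply_mem (T : V →ₗ[ℝ] V →ₗ[ℝ] V) (u : V) {x : V}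
    (hx : x ∈ K) : (koszulOn K T + koszulOn L T) u x ∈ K := by
  rw [LinearMap.add_apply, LinearMap.add_apply,
    koszulOn_apply_of_mem_orthogonal L T u (hKL hx), add_zero]
  exact koszulOn_apply_mem K T u x

theorem isSymmOn_sub_alternation_koszulOn_add {T : V →ₗ[ℝ] V →ₗ[ℝ] V} (hT : ∀ v, T v v = 0) :
    IsSymmOn (T - alternation (koszulOn K T + koszulOn L T)) K := by
  have hL : ∀ u, ∀ v ∈ K, ∀ w ∈ K, ⟪alternation (koszulOn L T) u v, w⟫ = 0 := by
    intro u v hv w hw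
    rw [alternation_apply, koszulOn_apply_of_mem_orthogonal L T u (hKL hv), zero_sub,
      inner_neg_left, hKL.symm.inner_eq (koszulOn_apply_mem L T v u) hw, neg_zero]
  rw [map_add, ← sub_sub]
  exact (isSymmOn_sub_alternation_koszulOn K hT).sub
    fun u v hv w hw => (hL u v hv w hw).trans (hL u w hw v hv).symm

end OrthogonalPair

end InnerProductSpace

/-- Let `V = V₁ ⊕ V₂` be an orthogonal direct sum decomposition of a
finite-dimensional real inner product space, and let
`𝔤 = {A ∈ 𝔰𝔬(V) : A(V₁) ⊆ V₁, A(V₂) ⊆ V₂}`.  With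
`W = {T̃ ∈ A²(V;V) : ⟪T̃(u,v),w⟫ = ⟪T̃(u,w),v⟫ whenever v, w lie in the same summand}`,
every alternating bilinear `T : V × V → V` decomposes uniquely as `T = δτ + T̃` with
`τ ∈ Hom(V,𝔤)` and `T̃ ∈ W`. -/
theorem direct_sum_alternation_almost_product
    {V : Type*} [NormedAddCommGroup V] [InnerProductSpace ℝ V] [FiniteDimensional ℝ V]
    (V₁ V₂ : Submodule ℝ V)
    (horth : ∀ x ∈ V₁, ∀ y ∈ V₂, ⟪x, y⟫ = 0)
    (hcompl : IsCompl V₁ V₂)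
    (T : V →ₗ[ℝ] V →ₗ[ℝ] V) (hT : ∀ v : V, T v v = 0) :
    ∃! p : (V →ₗ[ℝ] (V →ₗ[ℝ] V)) × (V →ₗ[ℝ] V →ₗ[ℝ] V),
      (∀ u v w : V, ⟪p.1 u v, w⟫ + ⟪v, p.1 u w⟫ = 0) ∧
      (∀ u : V, ∀ x ∈ V₁, p.1 u x ∈ V₁) ∧
      (∀ u : V, ∀ x ∈ V₂, p.1 u x ∈ V₂) ∧
      (∀ v : V, p.2 v v = 0) ∧
      (∀ u v w : V, ((v ∈ V₁ ∧ w ∈ V₁) ∨ (v ∈ V₂ ∧ w ∈ V₂)) →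
        ⟪p.2 u v, w⟫ = ⟪p.2 u w, v⟫) ∧
      (∀ u v : V, T u v = (p.1 u v - p.1 v u) + p.2 u v) := by
  have hV : V₁ ⟂ V₂ := Submodule.isOrtho_iff_inner_eq.mpr horth
  set τ := koszulOn V₁ T + koszulOn V₂ T
  have hτ_comm : koszulOn V₂ T + koszulOn V₁ T = τ := add_comm _ _
  have hτ : IsSkewValued τ := (isSkewValued_koszulOn V₁ hT).add (isSkewValued_koszulOn V₂ hT)
  have hτ₁ : ∀ u, ∀ x ∈ V₁, τ u x ∈ V₁ := fun u _ => koszulOn_add_koszulOn_apply_mem hV T u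
  have hτ₂ : ∀ u, ∀ x ∈ V₂, τ u x ∈ V₂ :=
    hτ_comm ▸ fun u _ => koszulOn_add_koszulOn_apply_mem hV.symm T u
  have hW₁ : IsSymmOn (T - alternation τ) V₁ := isSymmOn_sub_alternation_koszulOn_add hV hT
  have hW₂ : IsSymmOn (T - alternation τ) V₂ :=
    hτ_comm ▸ isSymmOn_sub_alternation_koszulOn_add hV.symm hT
  refine ⟨(τ, T - alternation τ), ⟨hτ, hτ₁, hτ₂, fun v => by simp [hT], ?_, fun u v => by simp⟩, ?_⟩
  · rintro u v w (⟨hv, hw⟩ | ⟨hv, hw⟩)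
    exacts [hW₁ u v hv w hw, hW₂ u v hv w hw]
  rintro ⟨σ, S⟩ ⟨hσ, hσ₁, hσ₂, -, hS, hTS⟩
  have hδ : alternation (σ - τ) = (T - alternation τ) - S := by
    ext u v; simp [hTS]; abel
  have hστ : σ - τ = 0 := (IsSkewValued.sub hσ hτ).eq_zero_of_isSymmOn_alternation
    (fun u x hx => V₁.sub_mem (hσ₁ u x hx) (hτ₁ u x hx))
    (hδ ▸ hW₁.sub fun u v hv w hw => hS u v w (.inl ⟨hv, hw⟩)) hV hcompl.codisjoint
    (fun u x hx => V₂.sub_mem (hσ₂ u x hx) (hτ₂ u x hx))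
    (hδ ▸ hW₂.sub fun u v hv w hw => hS u v w (.inr ⟨hv, hw⟩))
  obtain rfl := sub_eq_zero.mp hστ
  ext u v <;> simp [hTS]
end

section
/- Let V be a finite-dimensional real inner product space with an orthogonal direct sum decomposition V = V₁ ⊕ V₂, let 𝔤 = {A ∈ 𝔰𝔬(V) : A(V₁) ⊆ V₁ and A(V₂) ⊆ V₂}, and let T ∈ A²(V;V) be written as T = δτ + T̃ where τ ∈ Hom(V,𝔤) and T̃ ∈ A²(V;V) satisfies ⟨T̃(u,v),w⟩ = ⟨T̃(u,w),v⟩ whenever v,w lie in the same summand. Then τ is given explicitly by: (i) ⟨τ(u)v,w⟩ = ½(⟨T(u,v),w⟩ + ⟨T(w,u),v⟩ + ⟨T(w,v),u⟩) whenever u,v,w all lie in the same summand Vα; (ii) ⟨τ(u)v,w⟩ = ½(⟨T(u,v),w⟩ − ⟨T(u,w),v⟩) whenever u ∈ Vα and v,w ∈ Vβ with α ≠ β; (iii) ⟨τ(u)v,w⟩ = 0 for every u ∈ V whenever v ∈ Vα, w ∈ Vβ with α ≠ β. -/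
open scoped RealInnerProductSpace

/-- Let `V = V₁ ⊕ V₂` be an orthogonal direct sum decomposition of a
finite-dimensional real inner product space, `𝔤` the skew-adjoint endomorphisms preserving
both summands, and `T = δτ + T̃` an alternating bilinear map with `τ ∈ Hom(V,𝔤)` and `T̃`
satisfying `⟪T̃(u,v),w⟫ = ⟪T̃(u,w),v⟫` whenever `v, w` lie in the same summand.  Then `τ` is
given by the explicit formulas (i), (ii), (iii). -/
theorem explicit_component_almost_product
    {V : Type*} [NormedAddCommGroup V] [InnerProductSpace ℝ V] [FiniteDimensional ℝ V]
    (V₁ V₂ : Submodule ℝ V)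
    (horth : ∀ x ∈ V₁, ∀ y ∈ V₂, ⟪x, y⟫ = 0)
    (hcompl : IsCompl V₁ V₂)
    (T : V →ₗ[ℝ] V →ₗ[ℝ] V) (hT : ∀ v : V, T v v = 0)
    (τ : V →ₗ[ℝ] (V →ₗ[ℝ] V))
    (hskew : ∀ u v w : V, ⟪τ u v, w⟫ + ⟪v, τ u w⟫ = 0)
    (hτ₁ : ∀ u : V, ∀ x ∈ V₁, τ u x ∈ V₁)
    (hτ₂ : ∀ u : V, ∀ x ∈ V₂, τ u x ∈ V₂)
    (T' : V →ₗ[ℝ] V →ₗ[ℝ] V) (hT' : ∀ v : V, T' v v = 0)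
    (hTsym : ∀ u v w : V, ((v ∈ V₁ ∧ w ∈ V₁) ∨ (v ∈ V₂ ∧ w ∈ V₂)) →
      ⟪T' u v, w⟫ = ⟪T' u w, v⟫)
    (hdec : ∀ u v : V, T u v = (τ u v - τ v u) + T' u v) :
    (∀ u v w : V,
      ((u ∈ V₁ ∧ v ∈ V₁ ∧ w ∈ V₁) ∨ (u ∈ V₂ ∧ v ∈ V₂ ∧ w ∈ V₂)) →
      ⟪τ u v, w⟫ = (1 / 2 : ℝ) * (⟪T u v, w⟫ + ⟪T w u, v⟫ + ⟪T w v, u⟫)) ∧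
    (∀ u v w : V,
      ((u ∈ V₁ ∧ v ∈ V₂ ∧ w ∈ V₂) ∨ (u ∈ V₂ ∧ v ∈ V₁ ∧ w ∈ V₁)) →
      ⟪τ u v, w⟫ = (1 / 2 : ℝ) * (⟪T u v, w⟫ - ⟪T u w, v⟫)) ∧
    (∀ u v w : V,
      ((v ∈ V₁ ∧ w ∈ V₂) ∨ (v ∈ V₂ ∧ w ∈ V₁)) → ⟪τ u v, w⟫ = 0) := by
  -- T' is alternating in its two arguments
  have hcs : ∀ u v : V, T' u v = - T' v u := by
    intro u v
    have h := hT' (u + v)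
    simp only [map_add, LinearMap.add_apply, hT', zero_add, add_zero] at h
    exact eq_neg_of_add_eq_zero_right h
  -- τ u is skew-adjoint in inner-product form
  have htcs : ∀ u v w : V, ⟪τ u v, w⟫ = - ⟪τ u w, v⟫ := by
    intro u v w
    have h := hskew u v w
    rw [real_inner_comm (τ u w) v] at h
    linarith
  -- (iii)
  have h3 : ∀ u v w : V, ((v ∈ V₁ ∧ w ∈ V₂) ∨ (v ∈ V₂ ∧ w ∈ V₁)) → ⟪τ u v, w⟫ = 0 := by
    intro u v w h
    rcases h with ⟨hv, hw⟩ | ⟨hv, hw⟩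
    · exact horth _ (hτ₁ u v hv) _ hw
    · rw [real_inner_comm]; exact horth _ hw _ (hτ₂ u v hv)
  -- T' vanishes on same-summand triples
  have hs0 : ∀ u v w : V,
      ((u ∈ V₁ ∧ v ∈ V₁ ∧ w ∈ V₁) ∨ (u ∈ V₂ ∧ v ∈ V₂ ∧ w ∈ V₂)) →
      ⟪T' u v, w⟫ = 0 := by
    intro u v w h
    have same : ∀ a b : V, a ∈ ({u, v, w} : Set V) → b ∈ ({u, v, w} : Set V) →
        ((a ∈ V₁ ∧ b ∈ V₁) ∨ (a ∈ V₂ ∧ b ∈ V₂)) := by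
      intro a b ha hb
      rcases h with ⟨hu, hv, hw⟩ | ⟨hu, hv, hw⟩
      · left
        constructor <;> [skip; skip] <;>
          first
          | (rcases ha with rfl | rfl | rfl <;> assumption)
          | (rcases hb with rfl | rfl | rfl <;> assumption)
      · right
        constructor <;> [skip; skip] <;>
          first
          | (rcases ha with rfl | rfl | rfl <;> assumption)
          | (rcases hb with rfl | rfl | rfl <;> assumption)
    have alt : ∀ a b c : V, ⟪T' a b, c⟫ = - ⟪T' b a, c⟫ := by
      intro a b c
      rw [hcs a b, inner_neg_left]
    have memu : u ∈ ({u, v, w} : Set V) := by simp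
    have memv : v ∈ ({u, v, w} : Set V) := by simp
    have memw : w ∈ ({u, v, w} : Set V) := by simp
    have e1 : ⟪T' u v, w⟫ = ⟪T' u w, v⟫ := hTsym u v w (same v w memv memw)
    have e2 : ⟪T' u w, v⟫ = - ⟪T' w u, v⟫ := alt u w v
    have e3 : ⟪T' w u, v⟫ = ⟪T' w v, u⟫ := hTsym w u v (same u v memu memv)
    have e4 : ⟪T' w v, u⟫ = - ⟪T' v w, u⟫ := alt w v u
    have e5 : ⟪T' v w, u⟫ = ⟪T' v u, w⟫ := hTsym v w u (same w u memw memu)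
    have e6 : ⟪T' v u, w⟫ = - ⟪T' u v, w⟫ := alt v u w
    linarith
  refine ⟨?_, ?_, h3⟩
  · -- (i)
    intro u v w h
    have d1 : ⟪T u v, w⟫ = ⟪τ u v, w⟫ - ⟪τ v u, w⟫ + ⟪T' u v, w⟫ := by
      rw [hdec u v, inner_add_left, inner_sub_left]
    have d2 : ⟪T w u, v⟫ = ⟪τ w u, v⟫ - ⟪τ u w, v⟫ + ⟪T' w u, v⟫ := by
      rw [hdec w u, inner_add_left, inner_sub_left]
    have d3 : ⟪T w v, u⟫ = ⟪τ w v, u⟫ - ⟪τ v w, u⟫ + ⟪T' w v, u⟫ := by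
      rw [hdec w v, inner_add_left, inner_sub_left]
    have s1 : ⟪T' u v, w⟫ = 0 := hs0 u v w h
    have s2 : ⟪T' w u, v⟫ = 0 := by
      apply hs0
      rcases h with ⟨hu, hv, hw⟩ | ⟨hu, hv, hw⟩
      · exact Or.inl ⟨hw, hu, hv⟩
      · exact Or.inr ⟨hw, hu, hv⟩
    have s3 : ⟪T' w v, u⟫ = 0 := by
      apply hs0
      rcases h with ⟨hu, hv, hw⟩ | ⟨hu, hv, hw⟩
      · exact Or.inl ⟨hw, hv, hu⟩
      · exact Or.inr ⟨hw, hv, hu⟩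
    have k1 : ⟪τ v u, w⟫ = - ⟪τ v w, u⟫ := htcs v u w
    have k2 : ⟪τ w u, v⟫ = - ⟪τ w v, u⟫ := htcs w u v
    have k3 : ⟪τ u w, v⟫ = - ⟪τ u v, w⟫ := htcs u w v
    linarith
  · -- (ii)
    intro u v w h
    have d1 : ⟪T u v, w⟫ = ⟪τ u v, w⟫ - ⟪τ v u, w⟫ + ⟪T' u v, w⟫ := by
      rw [hdec u v, inner_add_left, inner_sub_left]
    have d2 : ⟪T u w, v⟫ = ⟪τ u w, v⟫ - ⟪τ w u, v⟫ + ⟪T' u w, v⟫ := by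
      rw [hdec u w, inner_add_left, inner_sub_left]
    have z1 : ⟪τ v u, w⟫ = 0 := by
      apply h3
      rcases h with ⟨hu, hv, hw⟩ | ⟨hu, hv, hw⟩
      · exact Or.inl ⟨hu, hw⟩
      · exact Or.inr ⟨hu, hw⟩
    have z2 : ⟪τ w u, v⟫ = 0 := by
      apply h3
      rcases h with ⟨hu, hv, hw⟩ | ⟨hu, hv, hw⟩
      · exact Or.inl ⟨hu, hv⟩
      · exact Or.inr ⟨hu, hv⟩
    have ssym : ⟪T' u v, w⟫ = ⟪T' u w, v⟫ := by
      apply hTsym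
      rcases h with ⟨hu, hv, hw⟩ | ⟨hu, hv, hw⟩
      · exact Or.inr ⟨hv, hw⟩
      · exact Or.inl ⟨hv, hw⟩
    have k : ⟪τ u w, v⟫ = - ⟪τ u v, w⟫ := htcs u w v
    linarith
end

section
/- Let V be a finite-dimensional real vector space, r ≥ 0, and let t : V^{r+2} → V be a multilinear map that is symmetric in its first r+1 arguments and whose total symmetrization vanishes, i.e. Σ_{σ ∈ S_{r+2}} t(u_{σ(1)},…,u_{σ(r+2)}) = 0 for all u₁,…,u_{r+2} ∈ V. Then for all u₁,…,u_{r+1}, w ∈ V: Σ_{h=1}^{r+1} [ t(u₁,…,û_h,…,u_{r+1}, u_h, w) − t(u₁,…,û_h,…,u_{r+1}, w, u_h) ] = (r+2)·t(u₁,…,u_{r+1}, w), where û_h means the argument u_h is omitted from the first r slots and moved as indicated. Equivalently, (r+1)/(r+2) times the symmetrization over the first r+1 covariant arguments of the Spencer operator Dt recovers t, so the restriction of the Spencer operator to the kernel of total symmetrization is injective with this explicit left inverse. -/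
open Finset

/-- The cycle on `Fin (n+1)` sending `castSucc k ↦ j.succAbove k` and `last ↦ j`. -/
def spencerCyc {n : ℕ} (j : Fin (n + 1)) : Equiv.Perm (Fin (n + 1)) :=
  finSuccEquivLast.trans (finSuccEquiv' j).symm

@[simp] lemma spencerCyc_castSucc {n : ℕ} (j : Fin (n + 1)) (k : Fin n) :
    spencerCyc j (Fin.castSucc k) = j.succAbove k := by
  simp [spencerCyc]

@[simp] lemma spencerCyc_last {n : ℕ} (j : Fin (n + 1)) :
    spencerCyc j (Fin.last n) = j := by
  simp [spencerCyc]

/-- Extend a permutation of `Fin n` to a permutation of `Fin (n+1)` fixing `last`. -/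
def spencerExt {n : ℕ} (π : Equiv.Perm (Fin n)) : Equiv.Perm (Fin (n + 1)) :=
  (finSuccEquivLast.symm.permCongr π.optionCongr)

@[simp] lemma spencerExt_castSucc {n : ℕ} (π : Equiv.Perm (Fin n)) (k : Fin n) :
    spencerExt π (Fin.castSucc k) = Fin.castSucc (π k) := by
  simp [spencerExt, Equiv.permCongr_apply]

@[simp] lemma spencerExt_last {n : ℕ} (π : Equiv.Perm (Fin n)) :
    spencerExt π (Fin.last n) = Fin.last n := by
  simp [spencerExt, Equiv.permCongr_apply]

open Finset in
/-- Let `t : V^{r+2} → V` be a multilinear map, symmetric in its first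
`r+1` arguments, whose total symmetrization vanishes.  Then
`Σ_{h=1}^{r+1} [t(u₁,…,û_h,…,u_{r+1},u_h,w) − t(u₁,…,û_h,…,u_{r+1},w,u_h)]
  = (r+2)·t(u₁,…,u_{r+1},w)`,
i.e. `(r+1)/(r+2)` times the symmetrization of the Spencer operator is a left inverse on the
kernel of total symmetrization. -/
theorem spencer_left_inverse
    {V : Type*} [AddCommGroup V] [Module ℝ V] [FiniteDimensional ℝ V] (r : ℕ)
    (t : (Fin (r + 2) → V) → V)
    (hmul : ∀ (m : Fin (r + 2) → V) (i : Fin (r + 2)) (x y : V) (c : ℝ),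
      t (Function.update m i (x + c • y))
        = t (Function.update m i x) + c • t (Function.update m i y))
    (hsym : ∀ (m : Fin (r + 2) → V) (σ : Equiv.Perm (Fin (r + 2))),
      σ (Fin.last (r + 1)) = Fin.last (r + 1) → t (m ∘ σ) = t m)
    (htot : ∀ m : Fin (r + 2) → V, ∑ σ : Equiv.Perm (Fin (r + 2)), t (m ∘ σ) = 0) :
    ∀ (u : Fin (r + 1) → V) (w : V),
      ∑ h : Fin (r + 1),
          (t (Fin.snoc (Fin.snoc (h.removeNth u) (u h)) w)
            - t (Fin.snoc (Fin.snoc (h.removeNth u) w) (u h)))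
        = ((r : ℝ) + 2) • t (Fin.snoc u w) := by
  intro u w
  set m : Fin (r + 2) → V := Fin.snoc u w with hm
  -- the composite realizing the second term
  have hg2 : ∀ h : Fin (r + 1),
      m ∘ (spencerCyc (Fin.castSucc h)) = Fin.snoc (Fin.snoc (h.removeNth u) w) (u h) := by
    intro h
    funext x
    refine Fin.lastCases ?_ (fun k => ?_) x
    · simp [m, Fin.snoc_castSucc]
    · simp only [Function.comp_apply, spencerCyc_castSucc, Fin.snoc_castSucc]
      refine Fin.lastCases ?_ (fun k' => ?_) k
      · rw [Fin.succAbove_of_le_castSucc _ _ (by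
          simpa using Fin.castSucc_le_castSucc_iff.mpr (Fin.le_last h))]
        simp [m]
      · rw [Fin.castSucc_succAbove_castSucc]
        simp [m, Fin.removeNth]
  -- the composite realizing the first term
  have hg1 : ∀ h : Fin (r + 1),
      m ∘ (spencerExt (spencerCyc h)) = Fin.snoc (Fin.snoc (h.removeNth u) (u h)) w := by
    intro h
    funext x
    refine Fin.lastCases ?_ (fun k => ?_) x
    · simp [m]
    · simp only [Function.comp_apply, spencerExt_castSucc, Fin.snoc_castSucc]
      refine Fin.lastCases ?_ (fun k' => ?_) k
      · simp [m]
      · simp [m, Fin.removeNth]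
  -- the first term always equals t m
  have ht1 : ∀ h : Fin (r + 1),
      t (Fin.snoc (Fin.snoc (h.removeNth u) (u h)) w) = t m := by
    intro h
    rw [← hg1 h]
    exact hsym m _ (spencerExt_last _)
  -- t (m ∘ σ) only depends on σ last
  have key : ∀ σ τ : Equiv.Perm (Fin (r + 2)),
      σ (Fin.last (r + 1)) = τ (Fin.last (r + 1)) → t (m ∘ σ) = t (m ∘ τ) := by
    intro σ τ hστ
    have h2 : (m ∘ τ) ∘ (σ.trans τ.symm) = m ∘ σ := by
      funext i; simp
    have h3 := hsym (m ∘ τ) (σ.trans τ.symm) (by simp [hστ])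
    rwa [h2] at h3
  -- fiber sums
  have hfib : ∀ j : Fin (r + 2),
      (∑ σ ∈ univ.filter (fun σ : Equiv.Perm (Fin (r + 2)) => σ (Fin.last (r + 1)) = j),
        t (m ∘ σ))
      = (univ.filter (fun σ : Equiv.Perm (Fin (r + 2)) =>
          σ (Fin.last (r + 1)) = j)).card • t (m ∘ (spencerCyc j)) := by
    intro j
    rw [Finset.sum_congr rfl (fun σ hσ => key σ (spencerCyc j)
      (by rw [(Finset.mem_filter.mp hσ).2, spencerCyc_last]))]
    rw [Finset.sum_const]
  -- all fibers have the same cardinality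
  have hcard : ∀ j : Fin (r + 2),
      (univ.filter (fun σ : Equiv.Perm (Fin (r + 2)) => σ (Fin.last (r + 1)) = j)).card
      = (univ.filter (fun σ : Equiv.Perm (Fin (r + 2)) =>
          σ (Fin.last (r + 1)) = Fin.last (r + 1))).card := by
    intro j
    refine (Finset.card_equiv (Equiv.mulLeft (spencerCyc j)) (fun σ => ?_)).symm
    simp only [Finset.mem_filter, Finset.mem_univ, true_and, Equiv.coe_mulLeft,
      Equiv.Perm.mul_apply]
    constructor
    · intro hσ; rw [hσ, spencerCyc_last]
    · intro hσ
      have : spencerCyc j (σ (Fin.last (r + 1))) = spencerCyc j (Fin.last (r + 1)) := by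
        rw [hσ, spencerCyc_last]
      exact (spencerCyc j).injective this
  set N : ℕ := (univ.filter (fun σ : Equiv.Perm (Fin (r + 2)) =>
      σ (Fin.last (r + 1)) = Fin.last (r + 1))).card with hN
  have hNpos : N ≠ 0 := by
    refine Finset.card_ne_zero_of_mem (a := Equiv.refl _) ?_
    simp
  -- total symmetrization split into fibers
  have htot' : ∑ j : Fin (r + 2), t (m ∘ (spencerCyc j)) = 0 := by
    have h0 : ∑ j : Fin (r + 2), N • t (m ∘ (spencerCyc j)) = 0 := by
      rw [← htot m, ← Finset.sum_fiberwise univ (fun σ : Equiv.Perm (Fin (r + 2)) =>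
        σ (Fin.last (r + 1))) (fun σ => t (m ∘ σ))]
      exact Finset.sum_congr rfl fun j _ => by rw [hfib j, hcard j]
    rw [← Finset.smul_sum] at h0
    have h1 : (N : ℝ) • (∑ j : Fin (r + 2), t (m ∘ (spencerCyc j))) = 0 := by
      rw [Nat.cast_smul_eq_nsmul]; exact h0
    rcases smul_eq_zero.mp h1 with h | h
    · exact absurd (Nat.cast_eq_zero.mp h) hNpos
    · exact h
  -- split off the last fiber
  have hlast : t (m ∘ (spencerCyc (Fin.last (r + 1)))) = t m :=
    hsym m _ (spencerCyc_last _)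
  have ht2 : ∑ h : Fin (r + 1), t (Fin.snoc (Fin.snoc (h.removeNth u) w) (u h)) = - t m := by
    have := htot'
    rw [Fin.sum_univ_castSucc] at this
    rw [hlast] at this
    have h4 : ∑ h : Fin (r + 1), t (m ∘ (spencerCyc (Fin.castSucc h)))
        = ∑ h : Fin (r + 1), t (Fin.snoc (Fin.snoc (h.removeNth u) w) (u h)) :=
      Finset.sum_congr rfl fun h _ => by rw [hg2 h]
    rw [h4] at this
    exact eq_neg_of_add_eq_zero_left this
  -- put everything together
  rw [Finset.sum_sub_distrib, ht2]
  rw [Finset.sum_congr rfl (fun h _ => ht1 h), Finset.sum_const, Finset.card_univ,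
    Fintype.card_fin]
  rw [← Nat.cast_smul_eq_nsmul ℝ]
  push_cast
  module
end

section
/- Let V be a finite-dimensional real vector space, 𝔤 ⊆ End(V) a linear subspace whose first prolongation vanishes (the alternation operator δ : Hom(V,𝔤) → A²(V;V) is injective), and W ⊆ A²(V;V) a subspace with A²(V;V) = δ(Hom(V,𝔤)) ⊕ W; let P : A²(V;V) → Hom(V,𝔤) be the unique linear map with T − δ(P(T)) ∈ W for all T. Fix r ≥ 0, let E be the space of multilinear maps t : V^{r+2} → V symmetric in the first r+1 arguments, and let D : E → {multilinear maps V^{r+2} → V} be the Spencer operator (Dt)(u₁,…,u_r,v,w) = t(u₁,…,u_r,v,w) − t(u₁,…,u_r,w,v). Let E_𝔤 ⊆ E be the subspace of those t of the form t(u₁,…,u_{r+1},w) = τ(u₁,…,u_{r+1})(w) for some symmetric multilinear τ : V^{r+1} → 𝔤, and define Θ on D(E) by Θ(s)(u₁,…,u_{r+1},w) = Σ_{h=1}^{r+1} P( s(u₁,…,û_h,…,u_{r+1}, ·, ·) )(u_h)(w), noting that for s ∈ D(E) each map (v,w) ↦ s(u₁,…,u_r,v,w) is alternating. Then D(E) is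 the internal direct sum of D(E_𝔤) and ker(Θ) ∩ D(E). -/
/-!
Put `c = r + 1`. For `t ∈ E_𝔤` every slice `(v, w) ↦ (Dt)(x, v, w)` is `δ` of the
`Hom(V, 𝔤)`-valued slice `t(x, ·, ·)`, and `P ∘ δ = id` on `Hom(V, 𝔤)` by uniqueness of the
splitting; by the symmetry of `t` each of the `c` summands of `Θ(Dt)` is then `t` itself, so
`Θ ∘ D = c • id` on `E_𝔤`. Given `s = Dt`, the map `t₁ = c⁻¹ Θ(s)` lies in `E_𝔤` (symmetric
because `t` is), and `s = Dt₁ + (s - Dt₁)` with `Θ(s - Dt₁) = Θ(s) - c t₁ = 0`. Conversely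
`s = Dt' + y` with `t' ∈ E_𝔤` and `Θ y = 0` forces `c t' = Θ(Dt') = Θ(s) = c t₁`.
-/

/-- The Spencer operator `D` on multilinear maps `V^{r+2} → V` symmetric in the first `r+1`
arguments: `(Dt)(u₁,…,u_r,v,w) = t(u₁,…,u_r,v,w) − t(u₁,…,u_r,w,v)`. -/
noncomputable def spencerD {V : Type*} [AddCommGroup V] [Module ℝ V] (r : ℕ)
    (t : MultilinearMap ℝ (fun _ : Fin (r + 2) => V) V) :
    MultilinearMap ℝ (fun _ : Fin (r + 2) => V) V :=
  t - t.domDomCongr (Equiv.swap ((Fin.last r).castSucc) (Fin.last (r + 1)))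

/-- Symmetry of a multilinear map `V^{r+2} → V` in its first `r+1` arguments, i.e. membership
in the space `E`. -/
def SymFirst {V : Type*} [AddCommGroup V] [Module ℝ V] (r : ℕ)
    (t : MultilinearMap ℝ (fun _ : Fin (r + 2) => V) V) : Prop :=
  ∀ σ : Equiv.Perm (Fin (r + 2)), σ (Fin.last (r + 1)) = Fin.last (r + 1) →
    t.domDomCongr σ = t

/-- The alternating bilinear map `(v,w) ↦ s(u₁,…,u_r,v,w)` obtained by freezing the first `r`
arguments of a multilinear map `s : V^{r+2} → V`. -/
noncomputable def lastTwoCurry {V : Type*} [AddCommGroup V] [Module ℝ V] {r : ℕ}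
    (s : MultilinearMap ℝ (fun _ : Fin (r + 2) => V) V) (u : Fin r → V) :
    V →ₗ[ℝ] V →ₗ[ℝ] V :=
  s.curryRight.curryRight u

open Fin Equiv

namespace Fin

variable {n : ℕ} {α : Type*}

def liftPerm (ρ : Perm (Fin n)) : Perm (Fin (n + 1)) :=
  finSuccEquivLast.trans ((Equiv.optionCongr ρ).trans finSuccEquivLast.symm)

@[simp] lemma liftPerm_castSucc (ρ : Perm (Fin n)) (j : Fin n) :
    liftPerm ρ (castSucc j) = castSucc (ρ j) := by simp [liftPerm]

@[simp] lemma liftPerm_last (ρ : Perm (Fin n)) : liftPerm ρ (last n) = last n := by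
  simp [liftPerm]

lemma snoc_comp_liftPerm (x : Fin n → α) (a : α) (ρ : Perm (Fin n)) :
    snoc x a ∘ liftPerm ρ = snoc (x ∘ ρ) a := by
  ext i
  induction i using Fin.lastCases <;> simp

lemma exists_liftPerm_eq (σ : Perm (Fin (n + 1))) (hσ : σ (last n) = last n) :
    ∃ ρ : Perm (Fin n), liftPerm ρ = σ := by
  set e : Perm (Option (Fin n)) := finSuccEquivLast.symm.trans (σ.trans finSuccEquivLast)
  refine ⟨e.removeNone, Equiv.ext fun i => ?_⟩
  induction i using Fin.lastCases with
  | last => simp [hσ]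
  | cast j =>
    obtain ⟨k, hk⟩ :=
      exists_castSucc_eq.mpr fun hj => castSucc_ne_last j (σ.injective (hj.trans hσ.symm))
    have hek : e (some j) = some k := by simp [e, ← hk]
    have := removeNone_some e ⟨k, hek⟩
    rw [hek, Option.some_inj] at this
    simp [this, hk]

def cycleToLast (h : Fin (n + 1)) : Perm (Fin (n + 1)) :=
  finSuccEquivLast.trans (finSuccEquiv' h).symm

lemma comp_cycleToLast (u : Fin (n + 1) → α) (h : Fin (n + 1)) :
    u ∘ cycleToLast h = snoc (h.removeNth u) (u h) := by
  ext i
  induction i using Fin.lastCases <;> simp [cycleToLast, removeNth]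

lemma exists_perm_succAbove_eq (ρ : Perm (Fin (n + 1))) (h : Fin (n + 1)) :
    ∃ π : Perm (Fin n), ∀ j, ρ (h.succAbove j) = (ρ h).succAbove (π j) := by
  set e : Perm (Option (Fin n)) := (finSuccEquiv' h).symm.trans (ρ.trans (finSuccEquiv' (ρ h)))
  refine ⟨e.removeNone, fun j => ?_⟩
  obtain ⟨k, hk⟩ := exists_succAbove_eq fun hc => succAbove_ne h j (ρ.injective hc)
  have hek : e (some j) = some k := by simp [e, ← hk]
  have := removeNone_some e ⟨k, hek⟩
  rw [hek, Option.some_inj] at this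
  rw [this, hk]

lemma snoc_snoc_comp_swap (x : Fin n → α) (v w : α) :
    snoc (snoc x v) w ∘ swap (last n).castSucc (last (n + 1)) = snoc (snoc x w) v := by
  ext i
  induction i using Fin.lastCases with
  | last => simp [swap_apply_right]
  | cast j =>
    induction j using Fin.lastCases with
    | last => simp [swap_apply_left]
    | cast k =>
      rw [Function.comp_apply, swap_apply_of_ne_of_ne (by simp [castSucc_inj])
        (castSucc_lt_last _).ne]
      simp

end Fin

lemma MultilinearMap.ext_snoc {R M N : Type*} [CommSemiring R] [AddCommMonoid M]
    [AddCommMonoid N] [Module R M] [Module R N] {n : ℕ}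
    {f f' : MultilinearMap R (fun _ : Fin (n + 1) => M) N}
    (h : ∀ u w, f (snoc u w) = f' (snoc u w)) : f = f' := by
  ext m
  rw [← snoc_init_self m]
  exact h _ _

section Spencer

variable {V : Type*} [AddCommGroup V] [Module ℝ V] {r : ℕ}

@[simp] lemma lastTwoCurry_apply (s : MultilinearMap ℝ (fun _ : Fin (r + 2) => V) V)
    (x : Fin r → V) (v w : V) :
    lastTwoCurry s x v w = s (snoc (snoc x v) w) := rfl

lemma lastTwoCurry_sub (a b : MultilinearMap ℝ (fun _ : Fin (r + 2) => V) V) (x : Fin r → V) :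
    lastTwoCurry (a - b) x = lastTwoCurry a x - lastTwoCurry b x := rfl

lemma spencerD_apply_snoc_snoc (t : MultilinearMap ℝ (fun _ : Fin (r + 2) => V) V)
    (x : Fin r → V) (v w : V) :
    spencerD r t (snoc (snoc x v) w) = t (snoc (snoc x v) w) - t (snoc (snoc x w) v) := by
  rw [spencerD, sub_apply, MultilinearMap.domDomCongr_apply]
  exact congr_arg (t _ - t ·) (snoc_snoc_comp_swap x v w)

lemma lastTwoCurry_spencerD (t : MultilinearMap ℝ (fun _ : Fin (r + 2) => V) V)
    (x : Fin r → V) :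
    lastTwoCurry (spencerD r t) x = lastTwoCurry t x - (lastTwoCurry t x).flip := by
  ext v w
  simp [spencerD_apply_snoc_snoc]

lemma spencerD_sub (a b : MultilinearMap ℝ (fun _ : Fin (r + 2) => V) V) :
    spencerD r (a - b) = spencerD r a - spencerD r b := by
  ext m
  simp only [spencerD, sub_apply, MultilinearMap.domDomCongr_apply]
  abel

lemma symFirst_iff {t : MultilinearMap ℝ (fun _ : Fin (r + 2) => V) V} :
    SymFirst r t ↔ ∀ (ρ : Perm (Fin (r + 1))) u w, t (snoc (u ∘ ρ) w) = t (snoc u w) := by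
  constructor
  · intro ht ρ u w
    rw [← snoc_comp_liftPerm]
    exact DFunLike.congr_fun (ht (liftPerm ρ) (liftPerm_last ρ)) (snoc u w)
  · rintro ht σ hσ
    obtain ⟨ρ, rfl⟩ := exists_liftPerm_eq σ hσ
    refine MultilinearMap.ext_snoc fun u w => ?_
    rw [MultilinearMap.domDomCongr_apply, ← ht ρ u w, ← snoc_comp_liftPerm]
    rfl

lemma SymFirst.sub {a b : MultilinearMap ℝ (fun _ : Fin (r + 2) => V) V}
    (ha : SymFirst r a) (hb : SymFirst r b) : SymFirst r (a - b) := by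
  rw [symFirst_iff] at *
  intro ρ u w
  simp only [sub_apply, ha, hb]

lemma SymFirst.smul {a : MultilinearMap ℝ (fun _ : Fin (r + 2) => V) V}
    (ha : SymFirst r a) (c : ℝ) : SymFirst r (c • a) := by
  rw [symFirst_iff] at *
  intro ρ u w
  simp only [smul_apply, ha]

lemma SymFirst.lastTwoCurry_comp {t : MultilinearMap ℝ (fun _ : Fin (r + 2) => V) V}
    (ht : SymFirst r t) (π : Perm (Fin r)) (x : Fin r → V) :
    lastTwoCurry t (x ∘ π) = lastTwoCurry t x := by
  ext v w
  rw [lastTwoCurry_apply, lastTwoCurry_apply, ← snoc_comp_liftPerm]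
  exact symFirst_iff.mp ht _ _ _

/-- The operator `Θ`: its `h`-th summand moves `u_h` behind `u₁, …, û_h, …, u_{r+1}` and then
evaluates `P (s(u₁, …, û_h, …, u_{r+1}, ·, ·))` at `u_h`. -/
noncomputable def spencerTheta (P : (V →ₗ[ℝ] V →ₗ[ℝ] V) →ₗ[ℝ] (V →ₗ[ℝ] V →ₗ[ℝ] V))
    (s : MultilinearMap ℝ (fun _ : Fin (r + 2) => V) V) :
    MultilinearMap ℝ (fun _ : Fin (r + 2) => V) V :=
  ∑ h : Fin (r + 1),
    (P.compMultilinearMap s.curryRight.curryRight).uncurryRight.uncurryRight.domDomCongr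
      (liftPerm (cycleToLast h))

variable (P : (V →ₗ[ℝ] V →ₗ[ℝ] V) →ₗ[ℝ] (V →ₗ[ℝ] V →ₗ[ℝ] V))

lemma spencerTheta_apply_snoc (s : MultilinearMap ℝ (fun _ : Fin (r + 2) => V) V)
    (u : Fin (r + 1) → V) (w : V) :
    spencerTheta P s (snoc u w) = ∑ h, P (lastTwoCurry s (h.removeNth u)) (u h) w := by
  simp only [spencerTheta, sum_apply, MultilinearMap.domDomCongr_apply]
  refine Finset.sum_congr rfl fun h _ => ?_
  change MultilinearMap.uncurryRight _ (snoc u w ∘ liftPerm (cycleToLast h)) = _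
  rw [snoc_comp_liftPerm, comp_cycleToLast]
  simp [MultilinearMap.uncurryRight_apply, lastTwoCurry]

lemma spencerTheta_sub (a b : MultilinearMap ℝ (fun _ : Fin (r + 2) => V) V) :
    spencerTheta P (a - b) = spencerTheta P a - spencerTheta P b :=
  MultilinearMap.ext_snoc fun u w => by
    simp only [sub_apply, spencerTheta_apply_snoc, lastTwoCurry_sub, map_sub,
      LinearMap.sub_apply, Finset.sum_sub_distrib]

lemma spencerTheta_eq_zero_iff (s : MultilinearMap ℝ (fun _ : Fin (r + 2) => V) V) :
    spencerTheta P s = 0 ↔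
      ∀ (u : Fin (r + 1) → V) (w : V), ∑ h, P (lastTwoCurry s (h.removeNth u)) (u h) w = 0 := by
  simp only [← spencerTheta_apply_snoc]
  exact ⟨fun hs u w => by rw [hs]; rfl, fun hs => MultilinearMap.ext_snoc fun u w => hs u w⟩

lemma spencerTheta_curryRight_mem {g : Submodule ℝ (V →ₗ[ℝ] V)} (hPg : ∀ T u, P T u ∈ g)
    (s : MultilinearMap ℝ (fun _ : Fin (r + 2) => V) V) (c : ℝ) (u : Fin (r + 1) → V) :
    (c • spencerTheta P s).curryRight u ∈ g := by
  have : (c • spencerTheta P s).curryRight u =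
      c • ∑ h, P (lastTwoCurry s (h.removeNth u)) (u h) := by
    ext w
    simp [MultilinearMap.curryRight_apply, spencerTheta_apply_snoc]
  rw [this]
  exact g.smul_mem c (g.sum_mem fun h _ => hPg _ _)

lemma SymFirst.spencerTheta_spencerD {t : MultilinearMap ℝ (fun _ : Fin (r + 2) => V) V}
    (ht : SymFirst r t) : SymFirst r (spencerTheta P (spencerD r t)) := by
  refine symFirst_iff.mpr fun ρ u w => ?_
  simp only [spencerTheta_apply_snoc]
  refine Fintype.sum_equiv ρ _ _ fun h => ?_
  obtain ⟨π, hπ⟩ := exists_perm_succAbove_eq ρ h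
  have : h.removeNth (u ∘ ρ) = (ρ h).removeNth u ∘ π := by
    ext j
    simp [removeNth, hπ j]
  rw [this, lastTwoCurry_spencerD, lastTwoCurry_spencerD, ht.lastTwoCurry_comp,
    Function.comp_apply]

lemma proj_sub_flip_eq_self {g : Submodule ℝ (V →ₗ[ℝ] V)}
    {W : Submodule ℝ (V →ₗ[ℝ] V →ₗ[ℝ] V)}
    (hsplit : ∀ T : V →ₗ[ℝ] V →ₗ[ℝ] V, (∀ v : V, T v v = 0) →
      ∃! q : (V →ₗ[ℝ] (V →ₗ[ℝ] V)) × (V →ₗ[ℝ] V →ₗ[ℝ] V),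
        (∀ u : V, q.1 u ∈ g) ∧ q.2 ∈ W ∧ T = (q.1 - q.1.flip) + q.2)
    (hPg : ∀ (T : V →ₗ[ℝ] V →ₗ[ℝ] V) (u : V), P T u ∈ g)
    (hPW : ∀ T : V →ₗ[ℝ] V →ₗ[ℝ] V, (∀ v : V, T v v = 0) →
      T - (P T - (P T).flip) ∈ W)
    {τ : V →ₗ[ℝ] V →ₗ[ℝ] V} (hτ : ∀ u, τ u ∈ g) :
    P (τ - τ.flip) = τ := by
  have halt : ∀ v, (τ - τ.flip) v v = 0 := fun v => sub_self (τ v v)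
  obtain ⟨q, -, hq⟩ := hsplit _ halt
  have hτq := hq (τ, 0) ⟨hτ, W.zero_mem, (add_zero _).symm⟩
  have hPq := hq (P (τ - τ.flip), _) ⟨hPg _, hPW _ halt, (add_sub_cancel _ _).symm⟩
  exact congr_arg Prod.fst (hPq.trans hτq.symm)

lemma spencerTheta_spencerD_of_mem {g : Submodule ℝ (V →ₗ[ℝ] V)}
    (hPδ : ∀ τ : V →ₗ[ℝ] V →ₗ[ℝ] V, (∀ u, τ u ∈ g) → P (τ - τ.flip) = τ)
    {d : MultilinearMap ℝ (fun _ : Fin (r + 2) => V) V}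
    (hd : SymFirst r d) (hdg : ∀ u, d.curryRight u ∈ g) :
    spencerTheta P (spencerD r d) = ((r : ℝ) + 1) • d := by
  refine MultilinearMap.ext_snoc fun u w => ?_
  have hterm (h : Fin (r + 1)) :
      P (lastTwoCurry (spencerD r d) (h.removeNth u)) (u h) w = d (snoc u w) := by
    rw [lastTwoCurry_spencerD, hPδ _ fun v => hdg (snoc _ v),
      lastTwoCurry_apply, ← comp_cycleToLast, symFirst_iff.mp hd]
  simp only [spencerTheta_apply_snoc, hterm, smul_apply, Finset.sum_const, Finset.card_univ,
    Fintype.card_fin, ← Nat.cast_smul_eq_nsmul ℝ, Nat.cast_succ]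

end Spencer

theorem spencer_image_direct_sum_general
    {V : Type*} [AddCommGroup V] [Module ℝ V]
    (g : Submodule ℝ (V →ₗ[ℝ] V))
    (W : Submodule ℝ (V →ₗ[ℝ] V →ₗ[ℝ] V))
    -- `A²(V;V) = δ(Hom(V,𝔤)) ⊕ W`:
    (hsplit : ∀ T : V →ₗ[ℝ] V →ₗ[ℝ] V, (∀ v : V, T v v = 0) →
      ∃! q : (V →ₗ[ℝ] (V →ₗ[ℝ] V)) × (V →ₗ[ℝ] V →ₗ[ℝ] V),
        (∀ u : V, q.1 u ∈ g) ∧ q.2 ∈ W ∧ T = (q.1 - q.1.flip) + q.2)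
    -- `P` is the associated linear projection `A²(V;V) → Hom(V,𝔤)`:
    (P : (V →ₗ[ℝ] V →ₗ[ℝ] V) →ₗ[ℝ] (V →ₗ[ℝ] V →ₗ[ℝ] V))
    (hPg : ∀ (T : V →ₗ[ℝ] V →ₗ[ℝ] V) (u : V), P T u ∈ g)
    (hPW : ∀ T : V →ₗ[ℝ] V →ₗ[ℝ] V, (∀ v : V, T v v = 0) →
      T - (P T - (P T).flip) ∈ W)
    (r : ℕ) :
    ∀ s : MultilinearMap ℝ (fun _ : Fin (r + 2) => V) V,
      (∃ t, SymFirst r t ∧ spencerD r t = s) →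
      ∃! q : (MultilinearMap ℝ (fun _ : Fin (r + 2) => V) V) ×
              (MultilinearMap ℝ (fun _ : Fin (r + 2) => V) V),
        -- `q.1 ∈ D(E_𝔤)`:
        (∃ t₁, SymFirst r t₁ ∧ (∀ u : Fin (r + 1) → V, t₁.curryRight u ∈ g) ∧
          spencerD r t₁ = q.1) ∧
        -- `q.2 ∈ D(E)`:
        (∃ t₂, SymFirst r t₂ ∧ spencerD r t₂ = q.2) ∧
        -- `Θ(q.2) = 0`:
        (∀ (u : Fin (r + 1) → V) (w : V),
          ∑ h : Fin (r + 1), P (lastTwoCurry q.2 (h.removeNth u)) (u h) w = 0) ∧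
        s = q.1 + q.2 := by
  rintro s ⟨t, ht, rfl⟩
  have hr : (r : ℝ) + 1 ≠ 0 := by positivity
  set t₁ := ((r : ℝ) + 1)⁻¹ • spencerTheta P (spencerD r t)
  have ht₁ : SymFirst r t₁ := (ht.spencerTheta_spencerD P).smul _
  have ht₁g : ∀ u, t₁.curryRight u ∈ g := spencerTheta_curryRight_mem P hPg _ _
  have hker : ∀ t', SymFirst r t' → (∀ u, t'.curryRight u ∈ g) →
      (spencerTheta P (spencerD r t - spencerD r t') = 0 ↔ t' = t₁) := by
    intro t' ht' ht'g
    rw [spencerTheta_sub, sub_eq_zero, spencerTheta_spencerD_of_mem P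
      (fun _ => proj_sub_flip_eq_self P hsplit hPg hPW) ht' ht'g,
      eq_inv_smul_iff₀ hr, eq_comm]
  refine ⟨(spencerD r t₁, spencerD r t - spencerD r t₁),
    ⟨⟨t₁, ht₁, ht₁g, rfl⟩, ⟨t - t₁, ht.sub ht₁, spencerD_sub t t₁⟩,
      (spencerTheta_eq_zero_iff P _).mp ((hker t₁ ht₁ ht₁g).mpr rfl), (add_sub_cancel _ _).symm⟩,
    ?_⟩
  rintro ⟨_, y⟩ ⟨⟨t', ht', ht'g, rfl⟩, -, hy, hs⟩
  obtain rfl : y = spencerD r t - spencerD r t' := eq_sub_of_add_eq' hs.symm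
  obtain rfl := (hker t' ht' ht'g).mp ((spencerTheta_eq_zero_iff P _).mpr hy)
  rfl

/-- Let `𝔤 ⊆ End(V)` have vanishing first prolongation, let
`A²(V;V) = δ(Hom(V,𝔤)) ⊕ W`, and let `P` be the unique linear projection onto the
`Hom(V,𝔤)`-component (`T − δ(P T) ∈ W` for every alternating `T`, where `δτ = τ − τᶠˡⁱᵖ`).
Let `E` be the space of multilinear maps `V^{r+2} → V` symmetric in the first `r+1`
arguments, `D` the Spencer operator, `E_𝔤 ⊆ E` those `t` with `t(u₁,…,u_{r+1},·) ∈ 𝔤`, and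
`Θ(s)(u₁,…,u_{r+1},w) = Σ_h P(s(u₁,…,û_h,…,u_{r+1},·,·))(u_h)(w)` on `D(E)`.  Then `D(E)`
is the internal direct sum of `D(E_𝔤)` and `ker Θ ∩ D(E)`. -/
theorem spencer_image_direct_sum
    {V : Type*} [AddCommGroup V] [Module ℝ V] [FiniteDimensional ℝ V]
    (g : Submodule ℝ (V →ₗ[ℝ] V))
    -- the first prolongation of `𝔤` vanishes, i.e. `δ` is injective on `Hom(V,𝔤)`:
    (hprol : ∀ τ : V →ₗ[ℝ] (V →ₗ[ℝ] V),
      (∀ u : V, τ u ∈ g) → (∀ u v : V, τ u v = τ v u) → τ = 0)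
    (W : Submodule ℝ (V →ₗ[ℝ] V →ₗ[ℝ] V))
    (hWalt : ∀ T ∈ W, ∀ v : V, T v v = 0)
    -- `A²(V;V) = δ(Hom(V,𝔤)) ⊕ W`:
    (hsplit : ∀ T : V →ₗ[ℝ] V →ₗ[ℝ] V, (∀ v : V, T v v = 0) →
      ∃! q : (V →ₗ[ℝ] (V →ₗ[ℝ] V)) × (V →ₗ[ℝ] V →ₗ[ℝ] V),
        (∀ u : V, q.1 u ∈ g) ∧ q.2 ∈ W ∧ T = (q.1 - q.1.flip) + q.2)
    -- `P` is the associated linear projection `A²(V;V) → Hom(V,𝔤)`: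
    (P : (V →ₗ[ℝ] V →ₗ[ℝ] V) →ₗ[ℝ] (V →ₗ[ℝ] V →ₗ[ℝ] V))
    (hPg : ∀ (T : V →ₗ[ℝ] V →ₗ[ℝ] V) (u : V), P T u ∈ g)
    (hPW : ∀ T : V →ₗ[ℝ] V →ₗ[ℝ] V, (∀ v : V, T v v = 0) →
      T - (P T - (P T).flip) ∈ W)
    (r : ℕ) :
    ∀ s : MultilinearMap ℝ (fun _ : Fin (r + 2) => V) V,
      (∃ t, SymFirst r t ∧ spencerD r t = s) →
      ∃! q : (MultilinearMap ℝ (fun _ : Fin (r + 2) => V) V) ×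
              (MultilinearMap ℝ (fun _ : Fin (r + 2) => V) V),
        -- `q.1 ∈ D(E_𝔤)`:
        (∃ t₁, SymFirst r t₁ ∧ (∀ u : Fin (r + 1) → V, t₁.curryRight u ∈ g) ∧
          spencerD r t₁ = q.1) ∧
        -- `q.2 ∈ D(E)`:
        (∃ t₂, SymFirst r t₂ ∧ spencerD r t₂ = q.2) ∧
        -- `Θ(q.2) = 0`:
        (∀ (u : Fin (r + 1) → V) (w : V),
          ∑ h : Fin (r + 1), P (lastTwoCurry q.2 (h.removeNth u)) (u h) w = 0) ∧
        s = q.1 + q.2 :=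
  spencer_image_direct_sum_general g W hsplit P hPg hPW r
end

section
/- Let V be a finite-dimensional real inner product space, r ≥ 0, and let t : V^{r+2} → V be a multilinear map that is symmetric in its first r+1 arguments and whose total symmetrization vanishes (Σ_{σ ∈ S_{r+2}} t(u_{σ(1)},…,u_{σ(r+2)}) = 0 for all u's). Define Lt : V^{r+2} → V by ⟨(Lt)(u₁,…,u_r,a,b), c⟩ = ½( ⟨S_u(a,b),c⟩ + ⟨S_u(c,a),b⟩ + ⟨S_u(c,b),a⟩ ), where S_u(v,w) := t(u₁,…,u_r,v,w) − t(u₁,…,u_r,w,v). Then the following are equivalent: (i) Σ_{h=1}^{r+1} (Lt)(u₁,…,û_h,…,u_{r+1}, u_h, b) = 0 for all u₁,…,u_{r+1}, b ∈ V; (ii) ⟨t(u₁,…,u_{r+1}, v), w⟩ = ⟨t(u₁,…,u_{r+1}, w), v⟩ for all u₁,…,u_{r+1}, v, w ∈ V. -/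
open scoped RealInnerProductSpace

set_option linter.unusedSectionVars false
set_option maxHeartbeats 1000000

open Fin Function Equiv

namespace CycAux


lemma sv {n : ℕ} (p : Fin (n+1)) (i : Fin n) :
    (p.succAbove i : ℕ) = if (i:ℕ) < (p:ℕ) then (i:ℕ) else (i:ℕ)+1 := by
  rcases Nat.lt_or_ge (i:ℕ) (p:ℕ) with h|h
  · rw [Fin.succAbove_of_castSucc_lt p i (by rwa [Fin.lt_def, Fin.coe_castSucc]),
      if_pos h, Fin.coe_castSucc]
  · rw [Fin.succAbove_of_le_castSucc p i (by rw [Fin.le_def, Fin.coe_castSucc]; omega),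
      if_neg (by omega), Fin.val_succ]

lemma pv {n : ℕ} (p : Fin n) (i : Fin (n+1)) :
    (p.predAbove i : ℕ) = if (p:ℕ) < (i:ℕ) then (i:ℕ)-1 else (i:ℕ) := by
  rcases Nat.lt_or_ge (p:ℕ) (i:ℕ) with h|h
  · rw [Fin.predAbove_of_castSucc_lt p i (by rwa [Fin.lt_def, Fin.coe_castSucc]),
      if_pos h, Fin.coe_pred]
  · rw [Fin.predAbove_of_le_castSucc p i (by rw [Fin.le_def, Fin.coe_castSucc]; omega),
      if_neg (by omega), Fin.coe_castPred]

lemma P1 {n : ℕ} (j : Fin (n+2)) (h : Fin (n+1)) :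
    (j.succAbove h).succAbove (h.predAbove j) = j := by
  have hj := j.isLt; have hh := h.isLt
  apply Fin.ext
  simp only [sv, pv]
  split_ifs <;> omega

lemma P2 {n : ℕ} (j : Fin (n+2)) (h : Fin (n+1)) :
    (h.predAbove j).predAbove (j.succAbove h) = h := by
  have hj := j.isLt; have hh := h.isLt
  apply Fin.ext
  simp only [sv, pv]
  split_ifs <;> omega

lemma P3 {n : ℕ} (j : Fin (n+2)) (h : Fin (n+1)) (i : Fin n) :
    (j.succAbove h).succAbove ((h.predAbove j).succAbove i) = j.succAbove (h.succAbove i) := by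
  have hj := j.isLt; have hh := h.isLt; have hi := i.isLt
  apply Fin.ext
  simp only [sv, pv]
  split_ifs <;> omega

lemma snocSucc {n : ℕ} (h : Fin (n+1)) (i : Fin n) :
    (Fin.castSucc h).succAbove (Fin.castSucc i) = Fin.castSucc (h.succAbove i) := by
  apply Fin.ext
  simp only [sv, Fin.coe_castSucc]

lemma snocLast {n : ℕ} (h : Fin (n+1)) :
    (Fin.castSucc h).succAbove (Fin.last n) = Fin.last (n+1) := by
  have hh := h.isLt
  apply Fin.ext
  simp only [sv, Fin.coe_castSucc, Fin.val_last]
  split_ifs <;> omega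


def extLast {n : ℕ} (e : Equiv.Perm (Fin n)) : Equiv.Perm (Fin (n+1)) :=
  finSuccEquivLast.symm.permCongr (Equiv.optionCongr e)

@[simp] lemma extLast_last {n : ℕ} (e : Equiv.Perm (Fin n)) :
    extLast e (Fin.last n) = Fin.last n := by
  simp [extLast, Equiv.permCongr_apply]

@[simp] lemma extLast_castSucc {n : ℕ} (e : Equiv.Perm (Fin n)) (i : Fin n) :
    extLast e (Fin.castSucc i) = Fin.castSucc (e i) := by
  simp [extLast, Equiv.permCongr_apply]

variable {V : Type*} [NormedAddCommGroup V] [InnerProductSpace ℝ V]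
variable {r : ℕ} (t : (Fin (r + 2) → V) → V)

variable (hsym : ∀ (m : Fin (r + 2) → V) (σ : Equiv.Perm (Fin (r + 2))),
      σ (Fin.last (r + 1)) = Fin.last (r + 1) → t (m ∘ σ) = t m)

include hsym in
lemma perm_snoc (u : Fin (r+1) → V) (x : V) (e : Equiv.Perm (Fin (r+1))) :
    t (Fin.snoc (u ∘ e) x) = t (Fin.snoc u x) := by
  have he : Fin.snoc (u ∘ e) x = (Fin.snoc u x : Fin (r+2) → V) ∘ (extLast e) := by
    funext j
    induction j using Fin.lastCases with
    | last => simp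
    | cast i => simp
  rw [he]
  exact hsym _ _ (extLast_last e)

/-- the pivot permutation: `u ∘ pivot h = snoc (h.removeNth u) (u h)` -/
def pivot {n : ℕ} (h : Fin (n+1)) : Equiv.Perm (Fin (n+1)) :=
  finSuccEquivLast.trans (finSuccEquiv' h).symm

lemma comp_pivot {n : ℕ} (u : Fin (n+1) → V) (h : Fin (n+1)) :
    u ∘ (pivot h) = Fin.snoc (h.removeNth u) (u h) := by
  funext j
  induction j using Fin.lastCases with
  | last => simp [pivot]
  | cast i => simp [pivot, Fin.removeNth]

include hsym in
lemma key1 (u : Fin (r+1) → V) (h : Fin (r+1)) (x : V) :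
    t (Fin.snoc (Fin.snoc (h.removeNth u) (u h)) x) = t (Fin.snoc u x) := by
  rw [← comp_pivot u h]
  exact perm_snoc t hsym u x (pivot h)

variable (htot : ∀ m : Fin (r + 2) → V, ∑ σ : Equiv.Perm (Fin (r + 2)), t (m ∘ σ) = 0)

include hsym htot in
lemma keyTot (u : Fin (r+1) → V) (v : V) :
    t (Fin.snoc u v) + ∑ h : Fin (r+1),
      t (Fin.snoc (Fin.snoc (h.removeNth u) v) (u h)) = 0 := by
  classical
  set m : Fin (r+2) → V := Fin.snoc u v with hm
  -- step 1 : regroup the total symmetrization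
  have hstep : ∑ σ : Equiv.Perm (Fin (r+2)), t (m ∘ σ)
      = (Nat.factorial (r+1)) •
        ∑ j : Fin (r+2), t (m ∘ (Equiv.swap j (Fin.last (r+1)))) := by
    have hbij :
        Function.Bijective
          (fun p : Equiv.Perm (Fin (r+1)) × Fin (r+2) =>
            (Equiv.swap p.2 (Fin.last (r+1)) * extLast p.1 : Equiv.Perm (Fin (r+2)))) := by
      rw [Fintype.bijective_iff_injective_and_card]
      constructor
      · rintro ⟨e₁, j₁⟩ ⟨e₂, j₂⟩ hfe
        simp only at hfe
        have hj : j₁ = j₂ := by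
          have := congrArg (fun σ : Equiv.Perm (Fin (r+2)) => σ (Fin.last (r+1))) hfe
          simpa [Equiv.Perm.mul_apply] using this
        subst hj
        have hce := mul_left_cancel hfe
        have : e₁ = e₂ := by
          ext i
          have h2 : Fin.castSucc (e₁ i) = Fin.castSucc (e₂ i) := by
            simpa using congrArg (fun σ : Equiv.Perm (Fin (r+2)) => σ (Fin.castSucc i)) hce
          exact congrArg Fin.val (Fin.castSucc_injective _ h2)
        exact Prod.ext this rfl
      · simp only [Fintype.card_prod, Fintype.card_perm, Fintype.card_fin, Nat.factorial_succ]
        ring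
    rw [← Fintype.sum_bijective _ hbij _ (fun σ => t (m ∘ σ)) (fun p => rfl)]
    rw [Fintype.sum_prod_type_right]
    rw [Finset.smul_sum]
    refine Finset.sum_congr rfl (fun j _ => ?_)
    have heach : ∀ e : Equiv.Perm (Fin (r+1)),
        t (m ∘ ⇑(Equiv.swap j (Fin.last (r+1)) * extLast e))
          = t (m ∘ ⇑(Equiv.swap j (Fin.last (r+1)))) := by
      intro e
      have hcc : (m ∘ ⇑(Equiv.swap j (Fin.last (r+1)))) ∘ ⇑(extLast e)
          = m ∘ ⇑(Equiv.swap j (Fin.last (r+1)) * extLast e) := by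
        funext x; simp [Equiv.Perm.mul_apply, Function.comp]
      rw [← hcc]
      exact hsym _ _ (extLast_last e)
    show ∑ e : Equiv.Perm (Fin (r+1)),
        t (m ∘ ⇑(Equiv.swap j (Fin.last (r+1)) * extLast e)) = _
    rw [Finset.sum_congr rfl (fun e _ => heach e)]
    simp [Finset.card_univ, Fintype.card_perm]
  -- step 2 : each swap term
  have hswap : ∀ h : Fin (r+1),
      t (m ∘ (Equiv.swap (Fin.castSucc h) (Fin.last (r+1))))
        = t (Fin.snoc (Fin.snoc (h.removeNth u) v) (u h)) := by
    intro h
    have h1 : m ∘ (Equiv.swap (Fin.castSucc h) (Fin.last (r+1)))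
        = Fin.snoc (Function.update u h v) (u h) := by
      funext j
      induction j using Fin.lastCases with
      | last => simp [hm, Equiv.swap_apply_right]
      | cast i =>
        by_cases hih : i = h
        · subst hih
          simp [hm, Equiv.swap_apply_left]
        · have : Equiv.swap (Fin.castSucc h) (Fin.last (r+1)) (Fin.castSucc i)
              = Fin.castSucc i := by
            apply Equiv.swap_apply_of_ne_of_ne
            · simpa using fun hc => hih (Fin.castSucc_injective _ hc)
            · exact Fin.ne_of_lt (Fin.castSucc_lt_last i)
          simp [this, hm, Function.update_of_ne hih]
    rw [h1]
    have := key1 t hsym (Function.update u h v) h (u h)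
    rw [Fin.removeNth_update, Function.update_self] at this
    exact this.symm
  have h0 := htot m
  rw [hstep] at h0
  rw [Fin.sum_univ_castSucc] at h0
  rw [Finset.sum_congr rfl (fun h _ => hswap h)] at h0
  have hlast : t (m ∘ (Equiv.swap (Fin.last (r+1)) (Fin.last (r+1)))) = t (Fin.snoc u v) := by
    simp [Equiv.swap_self, hm]
  rw [hlast] at h0
  have hfac : (Nat.factorial (r+1) : ℝ) ≠ 0 := by
    exact_mod_cast Nat.factorial_ne_zero (r+1)
  have h1 : (Nat.factorial (r+1) : ℝ) •
      ((∑ h : Fin (r+1), t (Fin.snoc (Fin.snoc (h.removeNth u) v) (u h))) + t (Fin.snoc u v)) = 0 := by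
    rw [← Nat.cast_smul_eq_nsmul ℝ] at h0
    exact h0
  rcases smul_eq_zero.mp h1 with h2 | h2
  · exact absurd h2 hfac
  · rw [add_comm]; exact h2

/-- `F t u v w = ⟪t(u,v), w⟫` -/
def Ft (u : Fin (r+1) → V) (v w : V) : ℝ := ⟪t (Fin.snoc u v), w⟫

/-- `A t u v w = ⟪t(u,v), w⟫ - ⟪t(u,w), v⟫` -/
def At (u : Fin (r+1) → V) (v w : V) : ℝ := Ft t u v w - Ft t u w v

lemma Ft_def (u : Fin (r+1) → V) (v w : V) : Ft t u v w = ⟪t (Fin.snoc u v), w⟫ := rfl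

lemma At_def (u : Fin (r+1) → V) (v w : V) : At t u v w = Ft t u v w - Ft t u w v := rfl

lemma At_swap (u : Fin (r+1) → V) (v w : V) : At t u v w = - At t u w v := by
  simp only [At_def]; ring

include hsym in
lemma key1F (u : Fin (r+1) → V) (h : Fin (r+1)) (v w : V) :
    Ft t (Fin.snoc (h.removeNth u) (u h)) v w = Ft t u v w := by
  simp only [Ft_def, key1 t hsym]

include hsym in
lemma key1A (u : Fin (r+1) → V) (h : Fin (r+1)) (v w : V) :
    At t (Fin.snoc (h.removeNth u) (u h)) v w = At t u v w := by
  simp only [At_def, key1F t hsym]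

include hsym htot in
lemma sumF (u : Fin (r+1) → V) (v w : V) :
    ∑ h : Fin (r+1), Ft t (Fin.snoc (h.removeNth u) v) (u h) w = - Ft t u v w := by
  have h0 := keyTot t hsym htot u v
  have h1 : ∑ h : Fin (r+1), t (Fin.snoc (Fin.snoc (h.removeNth u) v) (u h))
      = - t (Fin.snoc u v) := by
    rw [eq_neg_iff_add_eq_zero, add_comm]; exact h0
  simp only [Ft_def]
  rw [← sum_inner, h1, inner_neg_left]

lemma removeNth_castSucc_snoc (u : Fin (r+1) → V) (b : V) (h : Fin (r+1)) (i : Fin (r+1)) :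
    Fin.removeNth (α := fun _ => V) (Fin.castSucc h) (Fin.snoc u b) i
      = (Fin.snoc (h.removeNth u) b : Fin (r+1) → V) i := by
  induction i using Fin.lastCases with
  | last => simp [Fin.removeNth, snocLast]
  | cast i => simp [Fin.removeNth, snocSucc]

lemma rmsnoc (u : Fin (r+1) → V) (b : V) (h : Fin (r+1)) :
    Fin.removeNth (α := fun _ => V) (Fin.castSucc h) (Fin.snoc u b)
      = (Fin.snoc (h.removeNth u) b : Fin (r+1) → V) :=
  funext (removeNth_castSucc_snoc u b h)

lemma double_removeNth (x : Fin (r+2) → V) (j : Fin (r+2)) (h : Fin (r+1)) (z : V) :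
    (Fin.snoc ((h.predAbove j).removeNth ((j.succAbove h).removeNth x)) z : Fin (r+1) → V)
      = (Fin.snoc (h.removeNth (j.removeNth x)) z : Fin (r+1) → V) := by
  funext i
  induction i using Fin.lastCases with
  | last => simp
  | cast i =>
    simp only [Fin.snoc_castSucc, Fin.removeNth]
    rw [P3]

include hsym in
lemma shift_block (x : Fin (r+2) → V) (j : Fin (r+2)) (h : Fin (r+1)) (c : V) :
    At t (Fin.snoc (h.removeNth (j.removeNth x)) (x j)) c (x (j.succAbove h))
      = At t ((j.succAbove h).removeNth x) c (x (j.succAbove h)) := by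
  have h1 := key1A t hsym ((j.succAbove h).removeNth x) (h.predAbove j) c (x (j.succAbove h))
  have h2 : ((j.succAbove h).removeNth x) (h.predAbove j) = x j := by
    simp only [Fin.removeNth]
    rw [P1]
  rw [h2, double_removeNth] at h1
  exact h1

end CycAux

/-- Let `V` be a finite-dimensional real inner product space and
`t : V^{r+2} → V` a multilinear map, symmetric in its first `r+1` arguments, with vanishing
total symmetrization.  Define `Lt` by
`⟪(Lt)(u₁,…,u_r,a,b), c⟫ = ½(⟪S_u(a,b),c⟫ + ⟪S_u(c,a),b⟫ + ⟪S_u(c,b),a⟫)` where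
`S_u(v,w) = t(u,v,w) − t(u,w,v)`.  Then the cyclic-sum condition
`Σ_h (Lt)(u₁,…,û_h,…,u_{r+1},u_h,b) = 0` holds iff
`⟪t(u₁,…,u_{r+1},v),w⟫ = ⟪t(u₁,…,u_{r+1},w),v⟫` for all arguments. -/
theorem cyclic_vanishing_iff_symmetric
    {V : Type*} [NormedAddCommGroup V] [InnerProductSpace ℝ V] [FiniteDimensional ℝ V]
    (r : ℕ)
    (t : (Fin (r + 2) → V) → V)
    (hmul : ∀ (m : Fin (r + 2) → V) (i : Fin (r + 2)) (x y : V) (c : ℝ),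
      t (Function.update m i (x + c • y))
        = t (Function.update m i x) + c • t (Function.update m i y))
    (hsym : ∀ (m : Fin (r + 2) → V) (σ : Equiv.Perm (Fin (r + 2))),
      σ (Fin.last (r + 1)) = Fin.last (r + 1) → t (m ∘ σ) = t m)
    (htot : ∀ m : Fin (r + 2) → V, ∑ σ : Equiv.Perm (Fin (r + 2)), t (m ∘ σ) = 0)
    (L : (Fin r → V) → V → V → V)
    (hL : ∀ (u : Fin r → V) (a b c : V),
      ⟪L u a b, c⟫ = (1 / 2 : ℝ) *
        (⟪t (Fin.snoc (Fin.snoc u a) b) - t (Fin.snoc (Fin.snoc u b) a), c⟫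
          + ⟪t (Fin.snoc (Fin.snoc u c) a) - t (Fin.snoc (Fin.snoc u a) c), b⟫
          + ⟪t (Fin.snoc (Fin.snoc u c) b) - t (Fin.snoc (Fin.snoc u b) c), a⟫)) :
    (∀ (u : Fin (r + 1) → V) (b : V),
        ∑ h : Fin (r + 1), L (h.removeNth u) (u h) b = 0)
      ↔ (∀ (u : Fin (r + 1) → V) (v w : V),
          ⟪t (Fin.snoc u v), w⟫ = ⟪t (Fin.snoc u w), v⟫) := by
    classical
  clear hmul
  -- the master identity
  have hIDENT : ∀ (u : Fin (r + 1) → V) (b c : V),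
      ∑ h : Fin (r + 1), ⟪L (h.removeNth u) (u h) b, c⟫
        = (1 / 2 : ℝ) * (((r : ℝ) + 3) * CycAux.At t u b c
            + ∑ h : Fin (r + 1),
              (CycAux.At t (Fin.snoc (h.removeNth u) c) b (u h)
                - CycAux.At t (Fin.snoc (h.removeNth u) b) c (u h))) := by
    intro u b c
    have hper : ∀ h : Fin (r + 1), ⟪L (h.removeNth u) (u h) b, c⟫
        = (1 / 2 : ℝ) * (CycAux.Ft t u b c
            - CycAux.Ft t (Fin.snoc (h.removeNth u) b) (u h) c
            + CycAux.Ft t (Fin.snoc (h.removeNth u) c) (u h) b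
            - CycAux.Ft t u c b
            + CycAux.Ft t (Fin.snoc (h.removeNth u) c) b (u h)
            - CycAux.Ft t (Fin.snoc (h.removeNth u) b) c (u h)) := by
      intro h
      rw [hL]
      rw [CycAux.key1 t hsym u h b, CycAux.key1 t hsym u h c]
      simp only [inner_sub_left, CycAux.Ft_def]
      ring
    rw [Finset.sum_congr rfl (fun h _ => hper h)]
    have e1 := CycAux.sumF t hsym htot u b c
    have e2 := CycAux.sumF t hsym htot u c b
    simp only [CycAux.At_def]
    rw [← Finset.mul_sum]
    simp only [Finset.sum_add_distrib, Finset.sum_sub_distrib, Finset.sum_const,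
      Finset.card_univ, Fintype.card_fin, nsmul_eq_mul]
    push_cast
    rw [e1, e2]
    ring
  constructor
  · -- cyclic vanishing → symmetry
    intro hi
    have hE : ∀ (u : Fin (r + 1) → V) (b c : V),
        ((r : ℝ) + 3) * CycAux.At t u b c
            + ∑ h : Fin (r + 1),
              (CycAux.At t (Fin.snoc (h.removeNth u) c) b (u h)
                - CycAux.At t (Fin.snoc (h.removeNth u) b) c (u h)) = 0 := by
      intro u b c
      have h1 : ∑ h : Fin (r + 1), ⟪L (h.removeNth u) (u h) b, c⟫ = 0 := by
        rw [← sum_inner, hi u b, inner_zero_left]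
      rw [hIDENT u b c] at h1
      linarith
    have hQ : ∀ (x : Fin (r + 2) → V) (c : V),
        ∑ j : Fin (r + 2), CycAux.At t (j.removeNth x) (x j) c = 0 := by
      intro x c
      have h0 : ∑ j : Fin (r + 2), (((r : ℝ) + 3) * CycAux.At t (j.removeNth x) (x j) c
          + ∑ h : Fin (r + 1),
            (CycAux.At t (Fin.snoc (h.removeNth (j.removeNth x)) c) (x j) (x (j.succAbove h))
              - CycAux.At t (Fin.snoc (h.removeNth (j.removeNth x)) (x j)) c (x (j.succAbove h))))
          = 0 :=
        Finset.sum_eq_zero (fun j _ => hE (j.removeNth x) (x j) c)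
      have hD1 : ∑ j : Fin (r + 2), ∑ h : Fin (r + 1),
          CycAux.At t (Fin.snoc (h.removeNth (j.removeNth x)) c) (x j) (x (j.succAbove h)) = 0 := by
        have hD1' : ∑ p : Fin (r + 2) × Fin (r + 1),
            CycAux.At t (Fin.snoc ((p.2).removeNth ((p.1).removeNth x)) c) (x p.1)
              (x (p.1.succAbove p.2)) = 0 := by
          refine Finset.sum_ninvolution (fun p => (p.1.succAbove p.2, p.2.predAbove p.1))
            ?_ ?_ (fun p => Finset.mem_univ _) ?_
          · rintro ⟨j, h⟩
            dsimp only
            rw [CycAux.double_removeNth, CycAux.P1]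
            simp only [CycAux.At_def]
            ring
          · rintro ⟨j, h⟩ _ hc
            exact Fin.succAbove_ne j h (congrArg Prod.fst hc)
          · rintro ⟨j, h⟩
            dsimp only
            rw [Prod.mk.injEq]
            exact ⟨CycAux.P1 j h, CycAux.P2 j h⟩
        exact Eq.trans
          (Fintype.sum_prod_type (f := fun p : Fin (r + 2) × Fin (r + 1) =>
            CycAux.At t (Fin.snoc ((p.2).removeNth ((p.1).removeNth x)) c) (x p.1)
              (x (p.1.succAbove p.2)))).symm hD1'
      have hD2 : ∑ j : Fin (r + 2), ∑ h : Fin (r + 1),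
          CycAux.At t (Fin.snoc (h.removeNth (j.removeNth x)) (x j)) c (x (j.succAbove h))
          = ((r : ℝ) + 1) * ∑ k : Fin (r + 2), CycAux.At t (k.removeNth x) c (x k) := by
        have hrw : ∀ (j : Fin (r + 2)) (h : Fin (r + 1)),
            CycAux.At t (Fin.snoc (h.removeNth (j.removeNth x)) (x j)) c (x (j.succAbove h))
              = CycAux.At t ((j.succAbove h).removeNth x) c (x (j.succAbove h)) :=
          fun j h => CycAux.shift_block t hsym x j h c
        have hj : ∀ j : Fin (r + 2),
            ∑ h : Fin (r + 1), CycAux.At t ((j.succAbove h).removeNth x) c (x (j.succAbove h))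
              = (∑ k : Fin (r + 2), CycAux.At t (k.removeNth x) c (x k))
                - CycAux.At t (j.removeNth x) c (x j) := by
          intro j
          have := Fin.sum_univ_succAbove
            (fun k : Fin (r + 2) => CycAux.At t (k.removeNth x) c (x k)) j
          linarith
        rw [Finset.sum_congr rfl
          (fun j _ => (Finset.sum_congr rfl (fun h _ => hrw j h)).trans (hj j))]
        rw [Finset.sum_sub_distrib, Finset.sum_const, Finset.card_univ, Fintype.card_fin,
          nsmul_eq_mul]
        push_cast
        ring
      have hS : ∑ k : Fin (r + 2), CycAux.At t (k.removeNth x) c (x k)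
          = - ∑ k : Fin (r + 2), CycAux.At t (k.removeNth x) (x k) c := by
        rw [← Finset.sum_neg_distrib]
        exact Finset.sum_congr rfl (fun k _ => CycAux.At_swap t _ _ _)
      rw [Finset.sum_add_distrib, ← Finset.mul_sum] at h0
      simp only [Finset.sum_sub_distrib] at h0
      rw [hD1, hD2] at h0
      have h2 : (2 * (r : ℝ) + 4) * (∑ j : Fin (r + 2), CycAux.At t (j.removeNth x) (x j) c)
          = 0 := by
        linear_combination h0 + ((r : ℝ) + 1) * hS
      have h3 : (2 * (r : ℝ) + 4) ≠ 0 := by positivity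
      exact (mul_eq_zero.mp h2).resolve_left h3
    have hQ' : ∀ (u : Fin (r + 1) → V) (b c : V),
        ∑ h : Fin (r + 1), CycAux.At t (Fin.snoc (h.removeNth u) b) (u h) c
          = - CycAux.At t u b c := by
      intro u b c
      have h0 := hQ (Fin.snoc u b) c
      rw [Fin.sum_univ_castSucc] at h0
      have hterm : ∀ h : Fin (r + 1),
          CycAux.At t (Fin.removeNth (α := fun _ => V) (Fin.castSucc h) (Fin.snoc u b))
            ((Fin.snoc u b : Fin (r + 2) → V) (Fin.castSucc h)) c
            = CycAux.At t (Fin.snoc (h.removeNth u) b) (u h) c := by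
        intro h
        rw [CycAux.rmsnoc u b h]
        rw [Fin.snoc_castSucc]
      have hl : Fin.removeNth (α := fun _ => V) (Fin.last (r + 1)) (Fin.snoc u b) = u := by
        funext i
        simp [Fin.removeNth]
      rw [Finset.sum_congr rfl (fun h _ => hterm h), hl, Fin.snoc_last] at h0
      linarith
    intro u v w
    have h1 := hE u v w
    have h2 := hQ' u w v
    have h3 := hQ' u v w
    have h4 : ∑ h : Fin (r + 1),
        (CycAux.At t (Fin.snoc (h.removeNth u) w) v (u h)
          - CycAux.At t (Fin.snoc (h.removeNth u) v) w (u h))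
        = - (∑ h : Fin (r + 1), CycAux.At t (Fin.snoc (h.removeNth u) w) (u h) v)
          + ∑ h : Fin (r + 1), CycAux.At t (Fin.snoc (h.removeNth u) v) (u h) w := by
      rw [← Finset.sum_neg_distrib, ← Finset.sum_add_distrib]
      refine Finset.sum_congr rfl (fun h _ => ?_)
      rw [CycAux.At_swap t (Fin.snoc (h.removeNth u) w) v (u h),
        CycAux.At_swap t (Fin.snoc (h.removeNth u) v) w (u h)]
      ring
    rw [h4, h2, h3] at h1
    have h5 := CycAux.At_swap t u v w
    have h6 : ((r : ℝ) + 1) * CycAux.At t u v w = 0 := by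
      linear_combination h1 - h5
    have h7 : CycAux.At t u v w = 0 :=
      (mul_eq_zero.mp h6).resolve_left (by positivity)
    simp only [CycAux.At_def, CycAux.Ft_def] at h7
    linarith
  · -- symmetry → cyclic vanishing
    intro hii u b
    have hA : ∀ (u' : Fin (r + 1) → V) (v w : V), CycAux.At t u' v w = 0 := by
      intro u' v w
      simp only [CycAux.At_def, CycAux.Ft_def]
      rw [hii u' v w]
      ring
    have h1 : ∀ c : V, ⟪∑ h : Fin (r + 1), L (h.removeNth u) (u h) b, c⟫ = 0 := by
      intro c
      rw [sum_inner, hIDENT u b c]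
      simp [hA]
    exact inner_self_eq_zero.mp (h1 _)
end

section
/- Let V be a finite-dimensional real inner product space and r ≥ 0. Let W^{r+1} be the space of multilinear maps t : V^{r+2} → V that are symmetric in the first r+1 arguments, whose total symmetrization vanishes (Σ_{σ ∈ S_{r+2}} t(u_{σ(1)},…,u_{σ(r+2)}) = 0 for all u's), and which satisfy ⟨t(u₁,…,u_{r+1},v),w⟩ = ⟨t(u₁,…,u_{r+1},w),v⟩ for all arguments. Let Y_{r+1} be the space of multilinear maps f : V^{r+3} → ℝ that are symmetric in their first two arguments, symmetric in their last r+1 arguments, and whose symmetrization over all arguments except the first vanishes: Σ_{σ ∈ S_{r+2}} f(x, z_{σ(1)},…,z_{σ(r+2)}) = 0 for all x, z₁,…,z_{r+2} ∈ V. Then the linear map sending t to the multilinear form f(x,y,u₁,…,u_{r+1}) := ⟨t(u₁,…,u_{r+1},x), y⟩ is a linear isomorphism from W^{r+1} onto Y_{r+1}, and it is equivariant for the natural orthogonal group actions: (g·t)(u₁,…,u_{r+2}) = g(t(g⁻¹u₁,…,g⁻¹u_{r+2})) on W^{r+1} and (g·f)(x₁,…,x_{r+3}) = f(g⁻¹x₁,…,g⁻¹x_{r+3})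 on Y_{r+1}, for g in the orthogonal group of V. -/
open scoped RealInnerProductSpace

/-- A function `t : V^k → V'` is multilinear (in the elementary sense). -/
def IsMultilinearFun {V V' : Type*} [AddCommGroup V] [Module ℝ V]
    [AddCommGroup V'] [Module ℝ V'] {k : ℕ} (t : (Fin k → V) → V') : Prop :=
  ∀ (m : Fin k → V) (i : Fin k) (x y : V) (c : ℝ),
    t (Function.update m i (x + c • y))
      = t (Function.update m i x) + c • t (Function.update m i y)

/-- Membership in the space `W^{r+1}`: multilinear maps `t : V^{r+2} → V`, symmetric in the
first `r+1` arguments, with vanishing total symmetrization, and satisfying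
`⟪t(u₁,…,u_{r+1},v),w⟫ = ⟪t(u₁,…,u_{r+1},w),v⟫`. -/
def MemWspace {V : Type*} [NormedAddCommGroup V] [InnerProductSpace ℝ V] (r : ℕ)
    (t : (Fin (r + 2) → V) → V) : Prop :=
  IsMultilinearFun t ∧
  (∀ (m : Fin (r + 2) → V) (σ : Equiv.Perm (Fin (r + 2))),
    σ (Fin.last (r + 1)) = Fin.last (r + 1) → t (m ∘ σ) = t m) ∧
  (∀ m : Fin (r + 2) → V, ∑ σ : Equiv.Perm (Fin (r + 2)), t (m ∘ σ) = 0) ∧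
  (∀ (u : Fin (r + 1) → V) (v w : V),
    ⟪t (Fin.snoc u v), w⟫ = ⟪t (Fin.snoc u w), v⟫)

/-- Membership in the space `Y_{r+1}`: multilinear forms `f : V^{r+3} → ℝ`, symmetric in the
first two arguments, symmetric in the last `r+1` arguments, whose symmetrization over all
arguments except the first vanishes. -/
def MemYspace {V : Type*} [NormedAddCommGroup V] [InnerProductSpace ℝ V] (r : ℕ)
    (f : (Fin (r + 3) → V) → ℝ) : Prop :=
  IsMultilinearFun f ∧
  (∀ m : Fin (r + 3) → V, f (m ∘ Equiv.swap 0 1) = f m) ∧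
  (∀ (m : Fin (r + 3) → V) (σ : Equiv.Perm (Fin (r + 3))),
    σ 0 = 0 → σ 1 = 1 → f (m ∘ σ) = f m) ∧
  (∀ (x : V) (z : Fin (r + 2) → V),
    ∑ σ : Equiv.Perm (Fin (r + 2)), f (Fin.cons x (z ∘ σ)) = 0)

/-! Under the correspondence `f(x, y, u) = ⟪t(u, x), y⟫`, which is bijective by the Riesz
representation theorem, each defining condition of `W^{r+1}` becomes one of `Y_{r+1}`:
multilinearity stays multilinearity, symmetry in `u` becomes symmetry in the last `r + 1` slots,
and `⟪t(u, v), w⟫ = ⟪t(u, w), v⟫` becomes symmetry in the first two slots. Given the latter,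
`f(x, z) = ⟪t(z ∘ ρ), x⟫` for the cyclic rotation `ρ`, and since `σ ↦ σ * ρ` permutes `S_{r+2}`
the two vanishing symmetrizations are equivalent. Equivariance is the invariance of the inner
product under isometries. -/

open Equiv

namespace Fin

variable {n : ℕ} {α : Type*}

theorem forall_fin_succ_pi_snoc {P : (Fin (n + 1) → α) → Prop} :
    (∀ m, P m) ↔ ∀ u x, P (snoc u x) :=
  ⟨fun h _ _ => h _, fun h m => snoc_init_self m ▸ h _ _⟩

theorem snoc_eq_cons_comp_finRotate (u : Fin n → α) (x : α) :
    snoc u x = cons x u ∘ finRotate (n + 1) := by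
  funext i
  induction i using lastCases with
  | last => simp
  | cast j => simp [coeSucc_eq_succ]

theorem cons_cons_comp_swap_zero_one (x y : α) (u : Fin n → α) :
    cons x (cons y u) ∘ swap 0 1 = cons y (cons x u) := by
  funext i
  refine cases ?_ (fun j => ?_) i
  · simp
  · refine cases ?_ (fun k => ?_) j
    · simp [succ_zero_eq_one]
    · simp [swap_apply_of_ne_of_ne (succ_ne_zero k.succ) (succ_succ_ne_one k)]

theorem exists_perm_comp_succAbove (p : Fin (n + 1)) {σ : Perm (Fin (n + 1))} (hσ : σ p = p) :
    ∃ τ : Perm (Fin n), σ ∘ p.succAbove = p.succAbove ∘ τ := by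
  refine ⟨(finSuccAboveEquiv p).symm.permCongr
    (σ.subtypePerm fun _ => σ.injective.ne_iff' hσ), funext fun i => ?_⟩
  exact congrArg Subtype.val
    ((finSuccAboveEquiv p).apply_symm_apply ⟨σ (p.succAbove i), _⟩).symm

theorem exists_perm_fixing_comp_succAbove (p : Fin (n + 1)) (τ : Perm (Fin n)) :
    ∃ σ : Perm (Fin (n + 1)), σ p = p ∧ σ ∘ p.succAbove = p.succAbove ∘ τ :=
  ⟨τ.extendDomain (finSuccAboveEquiv p),
    Perm.extendDomain_apply_not_subtype _ _ (not_not.2 rfl),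
    funext fun i => Perm.extendDomain_apply_image τ (finSuccAboveEquiv p) i⟩

theorem insertNth_comp_perm {p : Fin (n + 1)} {σ : Perm (Fin (n + 1))} {τ : Perm (Fin n)}
    (hσ : σ p = p) (hστ : σ ∘ p.succAbove = p.succAbove ∘ τ) (x : α) (u : Fin n → α) :
    p.insertNth x u ∘ σ = p.insertNth x (u ∘ τ) := by
  funext i
  induction i using p.succAboveCases with
  | x => simp [hσ]
  | p j => simp [show σ (p.succAbove j) = p.succAbove (τ j) from congrFun hστ j]

theorem forall_perm_fixing_iff {β : Type*} (p : Fin (n + 1)) (t : (Fin (n + 1) → α) → β) :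
    (∀ (m : Fin (n + 1) → α) (σ : Perm (Fin (n + 1))), σ p = p → t (m ∘ σ) = t m) ↔
      ∀ x (u : Fin n → α) (τ : Perm (Fin n)),
        t (p.insertNth x (u ∘ τ)) = t (p.insertNth x u) := by
  constructor
  · intro h x u τ
    obtain ⟨σ, hσ, hστ⟩ := exists_perm_fixing_comp_succAbove p τ
    rw [← insertNth_comp_perm hσ hστ, h _ _ hσ]
  · intro h m σ hσ
    obtain ⟨τ, hστ⟩ := exists_perm_comp_succAbove p hσ
    rw [← insertNth_self_removeNth p m, insertNth_comp_perm hσ hστ, h]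

theorem forall_perm_fixing_last_iff {β : Type*} (t : (Fin (n + 1) → α) → β) :
    (∀ (m : Fin (n + 1) → α) (σ : Perm (Fin (n + 1))), σ (last n) = last n → t (m ∘ σ) = t m) ↔
      ∀ x (u : Fin n → α) (τ : Perm (Fin n)), t (snoc (u ∘ τ) x) = t (snoc u x) := by
  simpa only [insertNth_last'] using forall_perm_fixing_iff (last n) t

theorem forall_perm_fixing_zero_one_iff {β : Type*} (f : (Fin (n + 2) → α) → β) :
    (∀ (m : Fin (n + 2) → α) (σ : Perm (Fin (n + 2))), σ 0 = 0 → σ 1 = 1 → f (m ∘ σ) = f m) ↔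
      ∀ x y (u : Fin n → α) (τ : Perm (Fin n)),
        f (cons x (cons y (u ∘ τ))) = f (cons x (cons y u)) := by
  simp only [← insertNth_zero']
  constructor
  · intro h x y u τ
    obtain ⟨σ₁, hσ₁, hστ₁⟩ := exists_perm_fixing_comp_succAbove 0 τ
    obtain ⟨σ, hσ, hσσ₁⟩ := exists_perm_fixing_comp_succAbove 0 σ₁
    have h1 : σ 1 = 1 := by simpa [hσ₁] using congrFun hσσ₁ 0
    rw [← insertNth_comp_perm hσ₁ hστ₁, ← insertNth_comp_perm hσ hσσ₁, h _ _ hσ h1]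
  · intro h m σ h0 h1
    obtain ⟨σ₁, hσσ₁⟩ := exists_perm_comp_succAbove 0 h0
    have hσ₁ : σ₁ 0 = 0 := succ_injective _ (by simpa [h1] using (congrFun hσσ₁ 0).symm)
    obtain ⟨τ, hστ⟩ := exists_perm_comp_succAbove 0 hσ₁
    rw [← insertNth_self_removeNth 0 m, ← insertNth_self_removeNth 0 (removeNth 0 m),
      insertNth_comp_perm h0 hσσ₁, insertNth_comp_perm hσ₁ hστ, h]

end Fin

section Multilinear

variable {V V' : Type*} [AddCommGroup V] [Module ℝ V] [AddCommGroup V'] [Module ℝ V'] {n : ℕ}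

theorem isLinearMap_of_add_smul {g : V → V'}
    (hg : ∀ (x y : V) (c : ℝ), g (x + c • y) = g x + c • g y) : IsLinearMap ℝ g := by
  have hzero : g 0 = 0 := by simpa using hg 0 0 1
  exact ⟨fun x y => by simpa using hg x y 1, fun c y => by simpa [hzero] using hg 0 y c⟩

theorem isMultilinearFun_cons_iff {f : (Fin (n + 1) → V) → V'} :
    IsMultilinearFun f ↔
      (∀ (u : Fin n → V) (x y : V) (c : ℝ),
        f (Fin.cons (x + c • y) u) = f (Fin.cons x u) + c • f (Fin.cons y u)) ∧
      ∀ x, IsMultilinearFun fun u : Fin n → V => f (Fin.cons x u) := by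
  simp only [IsMultilinearFun, Fin.forall_fin_succ_pi, Fin.forall_fin_succ,
    Fin.update_cons_zero, ← Fin.cons_update, forall_and, forall_const]

theorem isMultilinearFun_snoc_iff {f : (Fin (n + 1) → V) → V'} :
    IsMultilinearFun f ↔
      (∀ (u : Fin n → V) (x y : V) (c : ℝ),
        f (Fin.snoc u (x + c • y)) = f (Fin.snoc u x) + c • f (Fin.snoc u y)) ∧
      ∀ x, IsMultilinearFun fun u : Fin n → V => f (Fin.snoc u x) := by
  simp only [IsMultilinearFun, Fin.forall_fin_succ_pi_snoc, Fin.forall_fin_succ',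
    Fin.update_snoc_last, ← Fin.snoc_update, forall_and, forall_const]
  exact and_comm.trans (and_congr_right' forall_comm)

end Multilinear

section AssociatedForm

variable {V : Type*} [NormedAddCommGroup V] [InnerProductSpace ℝ V]

theorem isMultilinearFun_iff_inner_right {E : Type*} [AddCommGroup E] [Module ℝ E] {k : ℕ}
    {t : (Fin k → E) → V} :
    IsMultilinearFun t ↔ ∀ y, IsMultilinearFun fun m => ⟪t m, y⟫ := by
  refine ⟨fun ht y m i x x' c => ?_, fun ht m i x x' c => ext_inner_right ℝ fun y => ?_⟩
  · simp only [ht m i x x' c, inner_add_left, real_inner_smul_left, smul_eq_mul]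
  · simpa only [inner_add_left, real_inner_smul_left, smul_eq_mul] using ht y m i x x' c

variable {n : ℕ}

def IsAssociatedForm (t : (Fin (n + 1) → V) → V) (f : (Fin (n + 2) → V) → ℝ) : Prop :=
  ∀ x y (u : Fin n → V), f (Fin.cons x (Fin.cons y u)) = ⟪t (Fin.snoc u x), y⟫

def associatedForm (t : (Fin (n + 1) → V) → V) (m : Fin (n + 2) → V) : ℝ :=
  ⟪t (Fin.snoc (fun j : Fin n => m j.succ.succ) (m 0)), m 1⟫

theorem isAssociatedForm_associatedForm (t : (Fin (n + 1) → V) → V) :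
    IsAssociatedForm t (associatedForm t) := by
  intro x y u
  simp [associatedForm]

namespace IsAssociatedForm

variable {t t' : (Fin (n + 1) → V) → V} {f : (Fin (n + 2) → V) → ℝ}

theorem unique (h : IsAssociatedForm t f) (h' : IsAssociatedForm t' f) : t = t' := by
  funext m
  rw [← Fin.snoc_init_self m]
  exact ext_inner_right ℝ fun y => (h _ y _).symm.trans (h' _ y _)

theorem isMultilinearFun_iff (h : IsAssociatedForm t f) :
    IsMultilinearFun t ↔ IsMultilinearFun f := by
  unfold IsAssociatedForm at h
  rw [isMultilinearFun_iff_inner_right]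
  simp_rw [isMultilinearFun_snoc_iff (f := fun m => ⟪t m, _⟫)]
  conv_rhs => simp only [isMultilinearFun_cons_iff]
  simp only [Fin.forall_fin_succ_pi, h, inner_add_right, real_inner_smul_right, smul_eq_mul,
    forall_const, true_and, forall_and]
  exact and_congr_right' forall_comm

theorem inner_symm_iff (h : IsAssociatedForm t f) :
    (∀ (u : Fin n → V) (v w : V), ⟪t (Fin.snoc u v), w⟫ = ⟪t (Fin.snoc u w), v⟫) ↔
      ∀ m : Fin (n + 2) → V, f (m ∘ swap 0 1) = f m := by
  unfold IsAssociatedForm at h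
  simp only [Fin.forall_fin_succ_pi, Fin.cons_cons_comp_swap_zero_one, h]
  exact ⟨fun H w v u => H u v w, fun H u v w => H w v u⟩

theorem perm_symm_iff (h : IsAssociatedForm t f) :
    (∀ x (u : Fin n → V) (τ : Perm (Fin n)), t (Fin.snoc (u ∘ τ) x) = t (Fin.snoc u x)) ↔
      ∀ x y (u : Fin n → V) (τ : Perm (Fin n)),
        f (Fin.cons x (Fin.cons y (u ∘ τ))) = f (Fin.cons x (Fin.cons y u)) := by
  unfold IsAssociatedForm at h
  simp only [h, ext_iff_inner_right ℝ (E := V)]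
  exact ⟨fun H x y u τ => H x u τ y, fun H x u τ y => H x y u τ⟩

theorem apply_cons (h : IsAssociatedForm t f)
    (ht : ∀ (u : Fin n → V) (v w : V), ⟪t (Fin.snoc u v), w⟫ = ⟪t (Fin.snoc u w), v⟫)
    (x : V) (w : Fin (n + 1) → V) : f (Fin.cons x w) = ⟪t (w ∘ finRotate (n + 1)), x⟫ := by
  rw [← Fin.cons_self_tail w, h, ht, Fin.snoc_eq_cons_comp_finRotate]

theorem sum_perm_eq_zero_iff (h : IsAssociatedForm t f)
    (ht : ∀ (u : Fin n → V) (v w : V), ⟪t (Fin.snoc u v), w⟫ = ⟪t (Fin.snoc u w), v⟫) :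
    (∀ m : Fin (n + 1) → V, ∑ σ : Perm (Fin (n + 1)), t (m ∘ σ) = 0) ↔
      ∀ x (z : Fin (n + 1) → V), ∑ σ : Perm (Fin (n + 1)), f (Fin.cons x (z ∘ σ)) = 0 := by
  have key : ∀ x z, ∑ σ : Perm (Fin (n + 1)), f (Fin.cons x (z ∘ σ))
      = ⟪∑ σ : Perm (Fin (n + 1)), t (z ∘ σ), x⟫ := by
    intro x z
    simp only [h.apply_cons ht, sum_inner]
    exact Equiv.sum_comp (Equiv.mulRight (finRotate (n + 1)))
      fun σ : Perm (Fin (n + 1)) => ⟪t (z ∘ σ), x⟫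
  simp only [key]
  exact ⟨fun H x z => by rw [H, inner_zero_left],
    fun H z => ext_inner_right ℝ fun x => by rw [H, inner_zero_left]⟩

theorem memWspace_iff_memYspace {r : ℕ} {t : (Fin (r + 2) → V) → V}
    {f : (Fin (r + 3) → V) → ℝ} (h : IsAssociatedForm t f) :
    MemWspace r t ↔ MemYspace r f := by
  rw [MemWspace, MemYspace, h.isMultilinearFun_iff, Fin.forall_perm_fixing_last_iff,
    Fin.forall_perm_fixing_zero_one_iff, ← h.perm_symm_iff, ← h.inner_symm_iff]
  constructor
  · rintro ⟨hml, hperm, hsum, hinner⟩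
    exact ⟨hml, hinner, hperm, (h.sum_perm_eq_zero_iff hinner).1 hsum⟩
  · rintro ⟨hml, hinner, hperm, hsum⟩
    exact ⟨hml, hperm, (h.sum_perm_eq_zero_iff hinner).2 hsum, hinner⟩

end IsAssociatedForm

theorem exists_isAssociatedForm [FiniteDimensional ℝ V] {f : (Fin (n + 2) → V) → ℝ}
    (hf : IsMultilinearFun f) : ∃ t : (Fin (n + 1) → V) → V, IsAssociatedForm t f := by
  have hlin : ∀ x u, IsLinearMap ℝ fun y => f (Fin.cons x (Fin.cons y u)) := fun x u =>
    isLinearMap_of_add_smul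
      ((isMultilinearFun_cons_iff.1 ((isMultilinearFun_cons_iff.1 hf).2 x)).1 u)
  refine ⟨fun m => (InnerProductSpace.toDual ℝ V).symm
    (hlin (m (Fin.last n)) (Fin.init m)).mk'.toContinuousLinearMap, fun x y u => ?_⟩
  simp [InnerProductSpace.toDual_symm_apply]

end AssociatedForm

/-- The map `t ↦ f`, `f(x,y,u₁,…,u_{r+1}) := ⟪t(u₁,…,u_{r+1},x),y⟫`, is a
linear isomorphism from `W^{r+1}` onto `Y_{r+1}`, equivariant for the natural actions of the
orthogonal group of `V`. -/
theorem Wspace_iso_Yspace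
    {V : Type*} [NormedAddCommGroup V] [InnerProductSpace ℝ V] [FiniteDimensional ℝ V]
    (r : ℕ) :
    -- the map sends `W^{r+1}` into `Y_{r+1}`:
    (∀ t : (Fin (r + 2) → V) → V, MemWspace r t →
      MemYspace r (fun m : Fin (r + 3) → V =>
        ⟪t (Fin.snoc (fun j : Fin (r + 1) => m j.succ.succ) (m 0)), m 1⟫)) ∧
    -- it is bijective from `W^{r+1}` onto `Y_{r+1}` (it is linear by its very formula,
    -- the inner product being bilinear):
    (∀ f : (Fin (r + 3) → V) → ℝ, MemYspace r f →
      ∃! t : (Fin (r + 2) → V) → V, MemWspace r t ∧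
        ∀ (x y : V) (u : Fin (r + 1) → V),
          f (Fin.cons x (Fin.cons y u)) = ⟪t (Fin.snoc u x), y⟫) ∧
    -- equivariance for the orthogonal group actions
    -- `(g·t)(u₁,…,u_{r+2}) = g(t(g⁻¹u₁,…,g⁻¹u_{r+2}))` and
    -- `(g·f)(x₁,…,x_{r+3}) = f(g⁻¹x₁,…,g⁻¹x_{r+3})`:
    (∀ (g : V ≃ₗᵢ[ℝ] V) (t : (Fin (r + 2) → V) → V), MemWspace r t →
      ∀ (x y : V) (u : Fin (r + 1) → V),
        ⟪g (t (fun i : Fin (r + 2) => g.symm ((Fin.snoc u x : Fin (r + 2) → V) i))), y⟫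
          = ⟪t (Fin.snoc (fun j : Fin (r + 1) => g.symm (u j)) (g.symm x)), g.symm y⟫) := by
  refine ⟨fun t ht => (isAssociatedForm_associatedForm t).memWspace_iff_memYspace.1 ht,
    fun f hf => ?_, fun g t _ x y u => ?_⟩
  · obtain ⟨t, ht⟩ := exists_isAssociatedForm hf.1
    exact ⟨t, ⟨ht.memWspace_iff_memYspace.2 hf, ht⟩,
      fun t' ht' => IsAssociatedForm.unique ht'.2 ht⟩
  · rw [LinearIsometryEquiv.inner_map_eq_flip]
    exact congrArg (⟪t ·, g.symm y⟫) (Fin.comp_snoc g.symm u x)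
end
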